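/- arXiv:2512.05173 — 12 statements merged into one kernel-verified Lean document; each statement's English description precedes it below -/
import Mathlib

section
/- Let n ≥ 2, let a > 0 be a real number, and let P be a real polynomial in the n+1 variables X₀, …, Xₙ (an element of MvPolynomial (Fin (n+1)) ℝ). If P(x) = 0 for every point x ∈ ℝ^{n+1} satisfying x₀² + x₁² + ⋯ + xₙ² = a, then the polynomial X₀² + X₁² + ⋯ + Xₙ² − a divides P in the polynomial ring MvPolynomial (Fin (n+1)) ℝ. -/
/-!
View `P` as a polynomial in `X₀` over `ℝ[X₁, …, Xₙ]` and divide it by the monic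
`X₀² + (X₁² + ⋯ + Xₙ² - a)`. Specialising the remaining variables at a point `y` with
`|y|² < a` turns the divisor into `(X₀ - t)(X₀ + t)` with `t = √(a - |y|²) > 0`, and
`P(±t, y) = 0`, so the specialised remainder vanishes. Hence every coefficient of the
remainder vanishes on the open ball `|y|² < a`, and is therefore the zero polynomial.
-/

open MvPolynomial

namespace Polynomial

theorem mul_X_sub_C_dvd_of_isRoot {K : Type*} [Field K] {f : K[X]} {s r : K} (hsr : s ≠ r)
    (hs : f.IsRoot s) (hr : f.IsRoot r) : (X - C s) * (X - C r) ∣ f :=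
  (isCoprime_X_sub_C_of_isUnit_sub (sub_ne_zero_of_ne hsr).isUnit).mul_dvd
    (dvd_iff_isRoot.mpr hs) (dvd_iff_isRoot.mpr hr)

end Polynomial

namespace MvPolynomial

variable {σ : Type*} [Fintype σ]

theorem eq_zero_of_eval_eq_zero_on_isOpen {p : MvPolynomial σ ℝ} {U : Set (σ → ℝ)}
    (hU : IsOpen U) (hne : U.Nonempty) (h : ∀ x ∈ U, eval x p = 0) : p = 0 := by
  obtain ⟨x, hx⟩ := hne
  obtain ⟨r, hr, hball⟩ := Metric.isOpen_iff.mp hU x hx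
  refine funext_set (fun i => Metric.ball (x i) r) (fun i => ?_) fun y hy => ?_
  · simpa only [Real.ball_eq_Ioo] using Set.Ioo_infinite (by linarith)
  · rw [h y (hball (by rwa [ball_pi x hr])), map_zero]

theorem polynomial_eq_zero_of_map_eval_eq_zero_on_isOpen {F : Polynomial (MvPolynomial σ ℝ)}
    {U : Set (σ → ℝ)} (hU : IsOpen U) (hne : U.Nonempty)
    (h : ∀ x ∈ U, F.map (eval x) = 0) : F = 0 :=
  Polynomial.ext fun k => by
    rw [Polynomial.coeff_zero]
    exact eq_zero_of_eval_eq_zero_on_isOpen hU hne fun x hx => by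
      rw [← Polynomial.coeff_map, h x hx, Polynomial.coeff_zero]

end MvPolynomial

theorem finSuccEquiv_sum_X_sq_sub_C {R : Type*} [CommRing R] (n : ℕ) (a : R) :
    finSuccEquiv R n (∑ i : Fin (n + 1), X i ^ 2 - C a) =
      Polynomial.X ^ 2 + Polynomial.C (∑ i : Fin n, X i ^ 2 - C a) := by
  have hC : finSuccEquiv R n (C a) = Polynomial.C (C a) := (finSuccEquiv R n).commutes a
  simp only [Fin.sum_univ_succ, map_sub, map_add, map_sum, map_pow, finSuccEquiv_X_zero,
    finSuccEquiv_X_succ, hC]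
  ring

theorem finSuccEquiv_modByMonic_eq_zero_of_vanishing {n : ℕ} {a : ℝ} (ha : 0 < a)
    {P : MvPolynomial (Fin (n + 1)) ℝ}
    (hvan : ∀ x : Fin (n + 1) → ℝ, (∑ i, x i ^ 2) = a → eval x P = 0) :
    finSuccEquiv ℝ n P %ₘ (Polynomial.X ^ 2 + Polynomial.C (∑ i : Fin n, X i ^ 2 - C a)) = 0 := by
  refine polynomial_eq_zero_of_map_eval_eq_zero_on_isOpen (U := {y | ∑ i, y i ^ 2 < a})
    (isOpen_lt (by fun_prop) continuous_const) ⟨0, by simpa using ha⟩ fun y hy => ?_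
  set t := √(a - ∑ i, y i ^ 2)
  have ht : t ^ 2 = a - ∑ i, y i ^ 2 := Real.sq_sqrt (by linarith [hy.out])
  have hroot : ∀ s, s ^ 2 = t ^ 2 → ((finSuccEquiv ℝ n P).map (eval y)).IsRoot s :=
    fun s hs => by
      rw [Polynomial.IsRoot, ← eval_eq_eval_mv_eval']
      exact hvan _ (by simp [Fin.sum_univ_succ, hs, ht])
  have hfactor : (Polynomial.X ^ 2 + Polynomial.C (∑ i : Fin n, X i ^ 2 - C a)).map (eval y) =
      (Polynomial.X - Polynomial.C t) * (Polynomial.X - Polynomial.C (-t)) := by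
    have hc : eval y (∑ i : Fin n, X i ^ 2 - C a) = -t ^ 2 := by
      simp only [map_sub, map_sum, map_pow, eval_X, eval_C]; linarith
    simp only [Polynomial.map_add, Polynomial.map_pow, Polynomial.map_X, Polynomial.map_C, hc,
      map_neg, map_pow]
    ring
  rw [Polynomial.map_modByMonic _ (Polynomial.monic_X_pow_add_C _ two_ne_zero), hfactor,
    Polynomial.modByMonic_eq_zero_iff_dvd ((Polynomial.monic_X_sub_C t).mul
      (Polynomial.monic_X_sub_C (-t)))]
  have htpos : 0 < t := Real.sqrt_pos.mpr (by linarith [hy.out])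
  exact Polynomial.mul_X_sub_C_dvd_of_isRoot (by linarith) (hroot t rfl)
    (hroot (-t) (neg_sq t))

theorem vanishing_on_sphere_divisible_general (n : ℕ) (a : ℝ) (ha : 0 < a)
    (P : MvPolynomial (Fin (n + 1)) ℝ)
    (hvan : ∀ x : Fin (n + 1) → ℝ, (∑ i, x i ^ 2) = a → eval x P = 0) :
    ((∑ i : Fin (n + 1), (X i : MvPolynomial (Fin (n + 1)) ℝ) ^ 2) - C a) ∣ P := by
  rw [← map_dvd_iff (finSuccEquiv ℝ n), finSuccEquiv_sum_X_sq_sub_C,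
    ← Polynomial.modByMonic_eq_zero_iff_dvd (Polynomial.monic_X_pow_add_C _ two_ne_zero)]
  exact finSuccEquiv_modByMonic_eq_zero_of_vanishing ha hvan

/-- A real polynomial in `n+1 ≥ 3` variables vanishing on the sphere
`x₀² + ⋯ + xₙ² = a` (with `a > 0`) is divisible by `X₀² + ⋯ + Xₙ² − a`. -/
theorem vanishing_on_sphere_divisible (n : ℕ) (hn : 2 ≤ n) (a : ℝ) (ha : 0 < a)
    (P : MvPolynomial (Fin (n + 1)) ℝ)
    (hvan : ∀ x : Fin (n + 1) → ℝ, (∑ i, x i ^ 2) = a → eval x P = 0) :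
    ((∑ i : Fin (n + 1), (X i : MvPolynomial (Fin (n + 1)) ℝ) ^ 2) - C a) ∣ P :=
  vanishing_on_sphere_divisible_general n a ha P hvan
end

section
/- Let n ≥ 2, let a < 0 be a real number, and let P be a real polynomial in the n+1 variables X₀, …, Xₙ (an element of MvPolynomial (Fin (n+1)) ℝ). If P(x) = 0 for every point x ∈ ℝ^{n+1} satisfying −x₀² + x₁² + ⋯ + xₙ² = a and x₀ > 0 (that is, P vanishes on one sheet of the two-sheeted Lorentzian pseudosphere), then the polynomial −X₀² + X₁² + ⋯ + Xₙ² − a divides P in the polynomial ring MvPolynomial (Fin (n+1)) ℝ. -/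
/-!
Regard `P` as a polynomial in `X₀` over `A = ℝ[X₁, …, Xₙ]` and divide it by the monic
`X₀² - q`, where `q = X₁² + ⋯ + Xₙ² - a`; the remainder is `b X₀ + c` with `b c ∈ A`.
Since `q > 0` everywhere, each `x ∈ ℝⁿ` lifts to the point `(√q(x), x)` of the sheet, so
`b √q + c = 0` pointwise and therefore `b² q = c²` in `A`. On every line parallel to the
`X₁`-axis, `q` restricts to `t² + s` with `s > 0`, which is separable and hence squarefree,
and `b² q = c²` with `q` squarefree and not a unit forces `b = 0` by infinite descent
(`q ∣ c`, then `q ∣ b`, and the cofactors satisfy the same equation). Then `c = 0` as well.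
-/

theorem Squarefree.eq_zero_of_sq_mul_eq_sq {R : Type*} [CommRing R] [IsDomain R]
    [DecompositionMonoid R] [WfDvdMonoid R] {q : R} (hq : Squarefree q) (hq₁ : ¬IsUnit q)
    {b c : R} (h : b ^ 2 * q = c ^ 2) : b = 0 := by
  induction b using (wellFounded_dvdNotUnit (α := R)).induction generalizing c with
  | _ b ih =>
  by_contra hb
  have hq₀ : q ≠ 0 := hq.ne_zero
  obtain ⟨d, rfl⟩ : q ∣ c := hq.isRadical 2 c ⟨b ^ 2, by rw [← h, mul_comm]⟩
  have hb2 : b ^ 2 = q * d ^ 2 := mul_right_cancel₀ hq₀ (by linear_combination h)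
  obtain ⟨e, rfl⟩ : q ∣ b := hq.isRadical 2 b ⟨d ^ 2, hb2⟩
  have he : e ≠ 0 := by rintro rfl; simp at hb
  have hde : e ^ 2 * q = d ^ 2 :=
    mul_left_cancel₀ (pow_ne_zero 2 hq₀) (by linear_combination q * hb2)
  exact he (ih e ⟨he, q, hq₁, mul_comm _ _⟩ hde)

namespace Polynomial

theorem eq_zero_of_sq_mul_X_pow_sub_C_eq_sq {K : Type*} [Field K] {n : ℕ}
    (hn : (n : K) ≠ 0) {t : K} (ht : t ≠ 0) {b c : K[X]}
    (h : b ^ 2 * (X ^ n - C t) = c ^ 2) : b = 0 := by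
  refine Squarefree.eq_zero_of_sq_mul_eq_sq (separable_X_pow_sub_C t hn ht).squarefree ?_ h
  refine not_isUnit_of_natDegree_pos _ ?_
  rw [natDegree_X_pow_sub_C, Nat.pos_iff_ne_zero]
  rintro rfl
  simp at hn

theorem exists_modByMonic_X_sq_sub_C_eq {A : Type*} [CommRing A] [Nontrivial A]
    (F : A[X]) (q : A) : ∃ b c : A, F %ₘ (X ^ 2 - C q) = C b * X + C c := by
  have hM₂ : (X ^ 2 - C q).natDegree = 2 := natDegree_X_pow_sub_C
  have := natDegree_modByMonic_lt F (monic_X_pow_sub_C q two_ne_zero)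
    (fun h ↦ by simp [h] at hM₂)
  exact ⟨_, _, eq_X_add_C_of_natDegree_le_one (by omega)⟩

end Polynomial

namespace MvPolynomial

theorem finSuccEquiv_neg_X_zero_sq_add_sum_sq_sub_C {R : Type*} [CommRing R] {m : ℕ} (a : R) :
    finSuccEquiv R m (-(X 0 ^ 2) + ∑ i : Fin m, X i.succ ^ 2 - C a) =
      -(Polynomial.X ^ 2 - Polynomial.C (∑ i, X i ^ 2 - C a)) := by
  simp [finSuccEquiv_apply]
  ring

theorem sq_mul_eq_sq_of_forall_eval_mul_sqrt_add_eq_zero {σ : Type*} {b c q : MvPolynomial σ ℝ}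
    (hq : ∀ x, 0 ≤ eval x q) (h : ∀ x, eval x b * √(eval x q) + eval x c = 0) :
    b ^ 2 * q = c ^ 2 := by
  refine funext fun x ↦ ?_
  have hc : eval x c = -(eval x b * √(eval x q)) := by linarith [h x]
  simp only [map_mul, map_pow, hc, neg_sq, mul_pow, Real.sq_sqrt (hq x)]

theorem eq_zero_of_sq_mul_sum_sq_sub_C_eq_sq {m : ℕ} {a : ℝ} (ha : a < 0)
    {b c : MvPolynomial (Fin (m + 1)) ℝ} (h : b ^ 2 * (∑ i, X i ^ 2 - C a) = c ^ 2) :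
    b = 0 := by
  refine funext fun x ↦ ?_
  let L : MvPolynomial (Fin (m + 1)) ℝ →+* Polynomial ℝ :=
    (Polynomial.mapRingHom (eval (Fin.tail x))).comp (finSuccEquiv ℝ m).toRingHom
  have hL : ∀ p, eval x p = (L p).eval (x 0) := fun p ↦ by
    conv_lhs => rw [← Fin.cons_self_tail x]
    exact eval_eq_eval_mv_eval' _ _ _
  have hLq : L (∑ i, X i ^ 2 - C a) =
      Polynomial.X ^ 2 - Polynomial.C (a - ∑ i, Fin.tail x i ^ 2) := by
    simp [L, Fin.sum_univ_succ, finSuccEquiv_apply, Polynomial.map_sum]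
    ring
  have ht : a - ∑ i, Fin.tail x i ^ 2 ≠ 0 := by
    have := Finset.sum_nonneg fun i (_ : i ∈ Finset.univ) ↦ sq_nonneg (Fin.tail x i)
    linarith
  have hLb : L b = 0 := Polynomial.eq_zero_of_sq_mul_X_pow_sub_C_eq_sq (n := 2) (by norm_num) ht
    (c := L c) (by rw [← hLq, ← map_pow, ← map_pow, ← map_mul, h])
  rw [hL, hLb, Polynomial.eval_zero, map_zero]

end MvPolynomial

open MvPolynomial

/-- A real polynomial in `n+1 ≥ 3` variables vanishing on one sheet
(`x₀ > 0`) of the Lorentzian pseudosphere `−x₀² + x₁² + ⋯ + xₙ² = a` (with `a < 0`)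
is divisible by `−X₀² + X₁² + ⋯ + Xₙ² − a`. -/
theorem vanishing_on_pseudosphere_sheet_divisible (n : ℕ) (hn : 2 ≤ n) (a : ℝ) (ha : a < 0)
    (P : MvPolynomial (Fin (n + 1)) ℝ)
    (hvan : ∀ x : Fin (n + 1) → ℝ,
      (-(x 0 ^ 2) + ∑ i : Fin n, x i.succ ^ 2) = a → 0 < x 0 → eval x P = 0) :
    ((-((X 0 : MvPolynomial (Fin (n + 1)) ℝ) ^ 2)
        + ∑ i : Fin n, (X i.succ : MvPolynomial (Fin (n + 1)) ℝ) ^ 2) - C a) ∣ P := by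
  obtain ⟨m, rfl⟩ : ∃ m, n = m + 1 := ⟨n - 1, by omega⟩
  set q : MvPolynomial (Fin (m + 1)) ℝ := ∑ i, X i ^ 2 - C a with hq
  have hM := Polynomial.monic_X_pow_sub_C q two_ne_zero
  rw [← map_dvd_iff (finSuccEquiv ℝ (m + 1)), finSuccEquiv_neg_X_zero_sq_add_sum_sq_sub_C]
  refine neg_dvd.2 ((Polynomial.modByMonic_eq_zero_iff_dvd hM).1 ?_)
  obtain ⟨b, c, hbc⟩ := Polynomial.exists_modByMonic_X_sq_sub_C_eq (finSuccEquiv ℝ (m + 1) P) q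
  have hq_pos : ∀ x, 0 < eval x q := fun x ↦ by
    have := Finset.sum_nonneg fun i (_ : i ∈ Finset.univ) ↦ sq_nonneg (x i)
    simp only [hq, map_sub, map_sum, map_pow, eval_X, eval_C]
    linarith
  have hroot : ∀ x, eval x b * √(eval x q) + eval x c = 0 := fun x ↦ by
    have hy := Real.sq_sqrt (hq_pos x).le
    have h := hvan (Fin.cons (√(eval x q)) x)
      (by simp only [Fin.cons_zero, Fin.cons_succ, hy]; simp [hq]) (by simpa using hq_pos x)
    rw [eval_eq_eval_mv_eval', Polynomial.eval_map,
      ← Polynomial.eval₂_modByMonic_eq_self_of_root (q := Polynomial.X ^ 2 - Polynomial.C q)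
        (by simp [hy]), hbc] at h
    simpa using h
  have hb : b = 0 := eq_zero_of_sq_mul_sum_sq_sub_C_eq_sq ha
    (sq_mul_eq_sq_of_forall_eval_mul_sqrt_add_eq_zero (fun x ↦ (hq_pos x).le) hroot)
  have hc : c = 0 := funext fun x ↦ by simpa [hb] using hroot x
  rw [hbc, hb, hc, map_zero, zero_mul, zero_add]
end

section
/- Let q be an irrational real number, let λ ∈ ℝ, and let P ≠ 0 be a real polynomial in two groups of variables Y₁,…,Y_m and Z₁,…,Z_n (an element of MvPolynomial (Fin m ⊕ Fin n) ℝ, with Y-variables indexed by the left summand and Z-variables by the right summand). Suppose that, as an identity of polynomials, Σ_{k=1}^{m} Y_k·(∂P/∂Y_k) + q·Σ_{l=1}^{n} Z_l·(∂P/∂Z_l) = λ·P. Then there exist natural numbers i and j with λ = i + q·j, and P is bihomogeneous of bidegree (i, j): every monomial occurring in P (every element of the support of P) has total degree i in the Y-variables and total degree j in the Z-variables. -/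
/-!
The weighted Euler operator `Σ w_i X_i ∂_i` acts on the monomial `X^d` as multiplication by
`Σ w_i d_i`. Comparing coefficients of `X^d` in the identity therefore gives
`|d_Y| + q |d_Z| = λ` for every monomial of `P`, and since `q` is irrational the pair
`(|d_Y|, |d_Z|)` is determined by `λ`, hence is the same for all monomials.
-/

open MvPolynomial

namespace MvPolynomial

variable {R σ : Type*} [CommSemiring R]

theorem coeff_X_mul_pderiv (i : σ) (P : MvPolynomial σ R) (d : σ →₀ ℕ) :
    coeff d (X i * pderiv i P) = d i * coeff d P := by
  classical
  induction P using MvPolynomial.induction_on' with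
  | monomial s a =>
    rw [X_mul_pderiv_monomial, coeff_smul, coeff_monomial, nsmul_eq_mul]
    split_ifs with hsd
    · rw [hsd]
    · rw [mul_zero, mul_zero]
  | add P Q hP hQ => rw [map_add, mul_add, coeff_add, coeff_add, hP, hQ, mul_add]

/-- Converse of `IsWeightedHomogeneous.sum_weight_X_mul_pderiv`. -/
theorem weight_eq_of_sum_smul_X_mul_pderiv_eq [Fintype σ] [IsDomain R] {w : σ → R} {lam : R}
    {P : MvPolynomial σ R} (h : ∑ i, w i • (X i * pderiv i P) = lam • P) :
    ∀ d ∈ P.support, ∑ i, w i * d i = lam := by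
  intro d hd
  have hcoeff := congrArg (coeff d) h
  simp only [coeff_sum, coeff_smul, coeff_X_mul_pderiv, smul_eq_mul, ← mul_assoc,
    ← Finset.sum_mul] at hcoeff
  exact mul_right_cancel₀ (mem_support_iff.mp hd) hcoeff

end MvPolynomial

theorem Irrational.eq_and_eq_of_ratCast_add_mul_eq {q : ℝ} (hq : Irrational q) {a b a' b' : ℚ}
    (h : (a : ℝ) + q * b = a' + q * b') : a = a' ∧ b = b' := by
  have hb : b = b' := by
    by_contra hne
    apply (hq.mul_ratCast (sub_ne_zero.mpr hne)).ne_rat (a' - a)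
    push_cast
    linear_combination h
  subst hb
  exact ⟨by exact_mod_cast (add_right_cancel h), rfl⟩

/-- If a nonzero real polynomial `P` in variables `Y₁,…,Y_m, Z₁,…,Z_n` satisfies the
Euler-type identity `Σ Y_k ∂P/∂Y_k + q Σ Z_l ∂P/∂Z_l = λ P` with `q` irrational, then
`λ = i + q·j` for natural numbers `i, j` and `P` is bihomogeneous of bidegree `(i, j)`. -/
theorem euler_identity_implies_bihomogeneous (m n : ℕ) (q lam : ℝ) (hq : Irrational q)
    (P : MvPolynomial (Fin m ⊕ Fin n) ℝ) (hP : P ≠ 0)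
    (heuler :
      (∑ k : Fin m, X (Sum.inl k) * pderiv (Sum.inl k) P)
        + C q * (∑ l : Fin n, X (Sum.inr l) * pderiv (Sum.inr l) P) = C lam * P) :
    ∃ i j : ℕ, lam = (i : ℝ) + q * (j : ℝ) ∧
      ∀ d ∈ P.support,
        (∑ k : Fin m, d (Sum.inl k)) = i ∧ (∑ l : Fin n, d (Sum.inr l)) = j := by
  have hweighted : ∑ i, Sum.elim (fun _ ↦ 1) (fun _ ↦ q) i • (X i * pderiv i P) = lam • P := by
    rw [Fintype.sum_sum_type, ← C_mul', ← heuler, C_mul', Finset.smul_sum]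
    simp only [Sum.elim_inl, Sum.elim_inr, one_smul]
  have hdegree (d) (hd : d ∈ P.support) :
      (((∑ k, d (Sum.inl k) : ℕ) : ℚ) : ℝ) + q * (((∑ l, d (Sum.inr l) : ℕ) : ℚ) : ℝ) = lam := by
    simpa [Fintype.sum_sum_type, Finset.mul_sum] using
      weight_eq_of_sum_smul_X_mul_pderiv_eq hweighted d hd
  obtain ⟨d₀, hd₀⟩ := support_nonempty.mpr hP
  refine ⟨∑ k, d₀ (Sum.inl k), ∑ l, d₀ (Sum.inr l), by exact_mod_cast (hdegree d₀ hd₀).symm,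
    fun d hd ↦ ?_⟩
  exact_mod_cast hq.eq_and_eq_of_ratCast_add_mul_eq ((hdegree d hd).trans (hdegree d₀ hd₀).symm)
end

section
/- Let V be a real Euclidean space (finite-dimensional real inner product space) of dimension at least 3, let a > 0, and let Σ = {v ∈ V : ⟨v, v⟩ = a}. Let A : V → V be a linear map with adjoint A*, and let k, γ, r ∈ ℝ with k ≠ 0. If k·(⟨Ay, z⟩ + 2γ)·⟨Ay, z⟩ − 3·(⟨Ay, Ay⟩ + ⟨A*z, A*z⟩) − r = 0 for all y, z ∈ Σ, then A = 0 and r = 0. -/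
open scoped RealInnerProductSpace

/-! Averaging the identity over `z` and `-z` removes `γ` and, through the adjoint, leaves
`k ⟪y, A* z⟫² = 3 (‖A y‖² + ‖A* z‖²) + r` on `Σ × Σ`. Hence for `z₁, z₂ ∈ Σ` the function
`y ↦ ⟪y, A* z₁⟫² - ⟪y, A* z₂⟫²` is constant on `Σ`; evaluating at a point of `Σ` orthogonal to
`A* z₁` and `A* z₂` shows the constant is `0`, so `A* z₁ = ± A* z₂`.
Thus `A*` agrees up to sign on vectors of equal norm; comparing `z`, `z'` and `z ± z'` for `z' ⊥ z`
with `‖z'‖ = ‖z‖` forces `A* = 0`, so `A = 0`, and then the identity reads `r = 0`. -/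

section InnerProductSpace

variable {V : Type*} [NormedAddCommGroup V] [InnerProductSpace ℝ V]

theorem exists_ne_zero_forall_inner_eq_zero_of_card_lt [FiniteDimensional ℝ V] (s : Finset V)
    (hs : s.card < Module.finrank ℝ V) : ∃ y : V, y ≠ 0 ∧ ∀ w ∈ s, ⟪w, y⟫ = 0 := by
  have hspan : (Submodule.span ℝ (s : Set V))ᗮ ≠ ⊥ := by
    rw [Ne, Submodule.orthogonal_eq_bot_iff]
    intro htop
    have := finrank_span_finset_le_card (R := ℝ) s
    rw [Set.finrank, htop, finrank_top] at this
    omega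
  obtain ⟨y, hy, hy0⟩ := Submodule.exists_mem_ne_zero_of_ne_bot hspan
  exact ⟨y, hy0, fun w hw =>
    Submodule.inner_right_of_mem_orthogonal (Submodule.subset_span hw) hy⟩

theorem exists_ne_zero_inner_smul_self_eq {y : V} (hy : y ≠ 0) {a : ℝ} (ha : 0 < a) :
    ∃ c : ℝ, c ≠ 0 ∧ ⟪c • y, c • y⟫ = a := by
  have hy' : ‖y‖ ≠ 0 := norm_ne_zero_iff.mpr hy
  refine ⟨√a / ‖y‖, div_ne_zero (Real.sqrt_ne_zero'.mpr ha) hy', ?_⟩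
  rw [real_inner_smul_left, real_inner_smul_right, real_inner_self_eq_norm_sq]
  field_simp
  exact Real.sq_sqrt ha.le

theorem eq_or_eq_neg_of_forall_inner_sq_eq {w₁ w₂ : V}
    (h : ∀ y : V, ⟪y, w₁⟫ ^ 2 = ⟪y, w₂⟫ ^ 2) : w₁ = w₂ ∨ w₁ = -w₂ := by
  have h₁ := h w₁
  have h₂ := h w₂
  rw [real_inner_comm w₁ w₂] at h₂
  have hnorm : ⟪w₁, w₁⟫ = ⟪w₂, w₂⟫ :=
    (pow_left_inj₀ real_inner_self_nonneg real_inner_self_nonneg two_ne_zero).mp (h₁.trans h₂)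
  have hcross : (⟪w₁, w₂⟫ - ⟪w₁, w₁⟫) * (⟪w₁, w₂⟫ + ⟪w₁, w₁⟫) = 0 := by
    linear_combination -h₁
  rcases mul_eq_zero.mp hcross with hc | hc
  · left
    rw [← sub_eq_zero, ← inner_self_eq_zero (𝕜 := ℝ), inner_sub_left, inner_sub_right,
      inner_sub_right, real_inner_comm w₁ w₂]
    linear_combination -hnorm - 2 * hc
  · right
    rw [← sub_eq_zero, sub_neg_eq_add, ← inner_self_eq_zero (𝕜 := ℝ), inner_add_left,
      inner_add_right, inner_add_right, real_inner_comm w₁ w₂]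
    linear_combination -hnorm + 2 * hc

theorem eq_or_eq_neg_of_inner_sq_sub_inner_sq_eq_on_sphere [FiniteDimensional ℝ V]
    (hdim : 2 < Module.finrank ℝ V) {a : ℝ} (ha : 0 < a) {w₁ w₂ : V} {c : ℝ}
    (h : ∀ y : V, ⟪y, y⟫ = a → ⟪y, w₁⟫ ^ 2 - ⟪y, w₂⟫ ^ 2 = c) : w₁ = w₂ ∨ w₁ = -w₂ := by
  classical
  have hc : c = 0 := by
    obtain ⟨y, hy, hperp⟩ := exists_ne_zero_forall_inner_eq_zero_of_card_lt {w₁, w₂}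
      ((Finset.card_le_two).trans_lt hdim)
    obtain ⟨t, -, ht⟩ := exists_ne_zero_inner_smul_self_eq hy ha
    have := h _ ht
    rw [real_inner_comm, real_inner_smul_right, hperp w₁ (by simp), real_inner_comm,
      real_inner_smul_right, hperp w₂ (by simp)] at this
    linarith
  refine eq_or_eq_neg_of_forall_inner_sq_eq fun y => ?_
  rcases eq_or_ne y 0 with rfl | hy
  · simp
  obtain ⟨t, ht0, ht⟩ := exists_ne_zero_inner_smul_self_eq hy ha
  have := h _ ht
  rw [hc, real_inner_smul_left, real_inner_smul_left, mul_pow, mul_pow, ← mul_sub,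
    mul_eq_zero] at this
  exact sub_eq_zero.mp (this.resolve_left (pow_ne_zero 2 ht0))

variable {W : Type*} [AddCommGroup W] [Module ℝ W]

theorem LinearMap.map_eq_or_eq_neg_of_norm_eq (T : V →ₗ[ℝ] W) {a : ℝ} (ha : 0 < a)
    (h : ∀ z₁ z₂ : V, ⟪z₁, z₁⟫ = a → ⟪z₂, z₂⟫ = a → T z₁ = T z₂ ∨ T z₁ = -T z₂)
    {z₁ z₂ : V} (hz : ‖z₁‖ = ‖z₂‖) : T z₁ = T z₂ ∨ T z₁ = -T z₂ := by
  rcases eq_or_ne z₁ 0 with rfl | hz₁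
  · rw [norm_zero, eq_comm, norm_eq_zero] at hz
    simp [hz]
  obtain ⟨c, hc0, hc₁⟩ := exists_ne_zero_inner_smul_self_eq hz₁ ha
  have hc₂ : ⟪c • z₂, c • z₂⟫ = a := by
    rwa [real_inner_smul_left, real_inner_smul_right, real_inner_self_eq_norm_sq, ← hz,
      ← real_inner_self_eq_norm_sq, ← real_inner_smul_right, ← real_inner_smul_left]
  simpa only [map_smul, ← smul_neg, smul_right_inj hc0] using h _ _ hc₁ hc₂

theorem LinearMap.eq_zero_of_map_eq_or_eq_neg_of_norm_eq [FiniteDimensional ℝ V]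
    (hdim : 1 < Module.finrank ℝ V) (T : V →ₗ[ℝ] W)
    (h : ∀ z₁ z₂ : V, ‖z₁‖ = ‖z₂‖ → T z₁ = T z₂ ∨ T z₁ = -T z₂) : T = 0 := by
  ext z
  rcases eq_or_ne z 0 with rfl | hz
  · simp
  obtain ⟨y, hy, hperp⟩ :=
    exists_ne_zero_forall_inner_eq_zero_of_card_lt {z} (by simpa using hdim)
  set z' := (‖z‖ / ‖y‖) • y
  have hnorm : ‖z'‖ = ‖z‖ := by simp [z', norm_smul, hy]
  have hperp' : ⟪z, z'⟫ = 0 := by simp [z', real_inner_smul_right, hperp z (by simp)]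
  have hdiag : ‖z + z'‖ = ‖z - z'‖ := by
    rw [← mul_self_inj (norm_nonneg _) (norm_nonneg _),
      norm_add_sq_eq_norm_sq_add_norm_sq_real hperp',
      norm_sub_sq_eq_norm_sq_add_norm_sq_real hperp']
  have hdiag' : T z' = 0 ∨ T z = 0 := by
    rcases h _ _ hdiag with h₂ | h₂ <;> rw [map_add, map_sub] at h₂
    · left
      linear_combination (norm := module) (2⁻¹ : ℝ) • h₂
    · right
      linear_combination (norm := module) (2⁻¹ : ℝ) • h₂
  rw [LinearMap.zero_apply]
  rcases hdiag' with h₀ | h₀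
  · rcases h z z' hnorm.symm with h₁ | h₁ <;> simp [h₁, h₀]
  · exact h₀

end InnerProductSpace

/-- Let `V` be a Euclidean space of dimension at least 3, `a > 0`, and
`Σ = {v : ⟨v,v⟩ = a}`. If a linear map `A : V → V` with adjoint `A*` and constants
`k ≠ 0`, `γ`, `r` satisfy
`k(⟨Ay,z⟩ + 2γ)⟨Ay,z⟩ − 3(⟨Ay,Ay⟩ + ⟨A*z,A*z⟩) − r = 0` for all `y, z ∈ Σ`,
then `A = 0` and `r = 0`. -/
theorem sphere_bilinear_identity_forces_zero
    {V : Type*} [NormedAddCommGroup V] [InnerProductSpace ℝ V] [FiniteDimensional ℝ V]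
    (hdim : 3 ≤ Module.finrank ℝ V)
    (a : ℝ) (ha : 0 < a)
    (A Astar : V →ₗ[ℝ] V)
    (hadj : ∀ y z : V, ⟪A y, z⟫ = ⟪y, Astar z⟫)
    (k γ r : ℝ) (hk : k ≠ 0)
    (h : ∀ y z : V, ⟪y, y⟫ = a → ⟪z, z⟫ = a →
      k * (⟪A y, z⟫ + 2 * γ) * ⟪A y, z⟫
        - 3 * (⟪A y, A y⟫ + ⟪Astar z, Astar z⟫) - r = 0) :
    A = 0 ∧ r = 0 := by
  have heven : ∀ y z : V, ⟪y, y⟫ = a → ⟪z, z⟫ = a →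
      k * ⟪y, Astar z⟫ ^ 2 = 3 * (⟪A y, A y⟫ + ⟪Astar z, Astar z⟫) + r := by
    intro y z hy hz
    have hplus := h y z hy hz
    have hminus := h y (-z) hy (by rwa [inner_neg_neg])
    rw [map_neg, inner_neg_right, inner_neg_neg] at hminus
    rw [← hadj]
    linear_combination (hplus + hminus) / 2
  have hpm : ∀ z₁ z₂ : V, ⟪z₁, z₁⟫ = a → ⟪z₂, z₂⟫ = a →
      Astar z₁ = Astar z₂ ∨ Astar z₁ = -Astar z₂ := fun z₁ z₂ hz₁ hz₂ =>
    eq_or_eq_neg_of_inner_sq_sub_inner_sq_eq_on_sphere hdim ha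
      (c := 3 * (⟪Astar z₁, Astar z₁⟫ - ⟪Astar z₂, Astar z₂⟫) / k) fun y hy => by
        rw [eq_div_iff hk]
        linear_combination heven y z₁ hy hz₁ - heven y z₂ hy hz₂
  have hAstar : Astar = 0 := Astar.eq_zero_of_map_eq_or_eq_neg_of_norm_eq (by omega)
    fun _ _ => Astar.map_eq_or_eq_neg_of_norm_eq ha hpm
  have hA : A = 0 := by
    ext y
    rw [LinearMap.zero_apply, ← inner_self_eq_zero (𝕜 := ℝ), hadj, hAstar, LinearMap.zero_apply,
      inner_zero_right]
  refine ⟨hA, ?_⟩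
  obtain ⟨y, hy, -⟩ := exists_ne_zero_forall_inner_eq_zero_of_card_lt (∅ : Finset V)
    (by rw [Finset.card_empty]; omega)
  obtain ⟨c, -, hc⟩ := exists_ne_zero_inner_smul_self_eq hy ha
  simpa [hA, hAstar] using h _ _ hc hc
end

section
/- Consider M = ℝ × ℝ × ℂ with coordinates (ϑ, ξ, u), and for each point (ϑ, ξ, u) ∈ M the symmetric bilinear form g_{(ϑ,ξ,u)} on ℝ × ℝ × ℂ defined by g_{(ϑ,ξ,u)}((a, b, z), (a', b', z')) = a·a' + e^{−ϑ}·b·b' + e^{ϑ}·Re(z·conj(z')). For c, p ∈ ℝ and w, q ∈ ℂ with |w| = 1, define F : M → M by F(ϑ, ξ, u) = (ϑ + 2c, e^{c}·ξ + p, e^{−c}·w·u + q), and let L : ℝ × ℝ × ℂ → ℝ × ℝ × ℂ be the ℝ-linear map L(a, b, z) = (a, e^{c}·b, e^{−c}·w·z). Then F is differentiable with derivative equal to L at every point of M, and for every x ∈ M and all v, v' ∈ ℝ × ℝ × ℂ, g_{F(x)}(L v, L v') = g_{x}(v, v'); that is, F preserves the EPS metric tensor g. -/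
/-!
`F` is the affine map `x ↦ L x + (2c, p, q)`, so its derivative is `L` everywhere. The metric
depends on the base point only through `ϑ`, which `F` shifts by `2c`: the factor `e^{−2c}` this
puts on `e^{−ϑ}` is cancelled by the `e^{c}` scaling of `ξ`, and the factor `e^{2c}` on `e^{ϑ}` by
`|e^{−c} w|² = e^{−2c}`.
-/

open ComplexConjugate

theorem Complex.mul_mul_conj_mul (a z z' : ℂ) :
    a * z * conj (a * z') = (normSq a : ℂ) * (z * conj z') := by
  calc a * z * conj (a * z') = a * conj a * (z * conj z') := by rw [map_mul]; ring
    _ = (normSq a : ℂ) * (z * conj z') := by rw [mul_conj]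

theorem Complex.normSq_ofReal_mul_of_norm_eq_one {w : ℂ} (hw : ‖w‖ = 1) (r : ℝ) :
    normSq (r * w) = r ^ 2 := by
  rw [normSq_mul, normSq_ofReal, normSq_eq_norm_sq, hw]
  ring

noncomputable def epsMetric (x v v' : ℝ × ℝ × ℂ) : ℝ :=
  v.1 * v'.1 + Real.exp (-x.1) * v.2.1 * v'.2.1 + Real.exp x.1 * (v.2.2 * conj v'.2.2).re

theorem epsMetric_shift_scale (c : ℝ) {w : ℂ} (hw : ‖w‖ = 1) (ϑ ξ ξ' : ℝ) (u u' : ℂ)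
    (a b a' b' : ℝ) (z z' : ℂ) :
    epsMetric (ϑ + 2 * c, ξ', u') (a, Real.exp c * b, (Real.exp (-c) : ℂ) * w * z)
        (a', Real.exp c * b', (Real.exp (-c) : ℂ) * w * z') =
      epsMetric (ϑ, ξ, u) (a, b, z) (a', b', z') := by
  have hξ : Real.exp (-(ϑ + 2 * c)) * Real.exp c * Real.exp c = Real.exp (-ϑ) := by
    rw [← Real.exp_add, ← Real.exp_add]; ring_nf
  have hu : Real.exp (ϑ + 2 * c) * Real.exp (-c) ^ 2 = Real.exp ϑ := by
    rw [← Real.exp_nat_mul, ← Real.exp_add]; push_cast; ring_nf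
  simp only [epsMetric, Complex.mul_mul_conj_mul,
    Complex.normSq_ofReal_mul_of_norm_eq_one hw, Complex.re_ofReal_mul]
  rw [← hξ, ← hu]
  ring

/-- On `M = ℝ × ℝ × ℂ` with the EPS metric tensor
`g_{(ϑ,ξ,u)}((a,b,z),(a',b',z')) = a·a' + e^{−ϑ}·b·b' + e^{ϑ}·Re(z·conj z')`,
the map `F(ϑ,ξ,u) = (ϑ + 2c, e^c ξ + p, e^{−c} w u + q)` (with `|w| = 1`) has at every
point the derivative `L(a,b,z) = (a, e^c b, e^{−c} w z)`, and `L` takes `g` at `F(x)`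
back to `g` at `x`; that is, `F` is an isometry of the EPS metric. -/
theorem eps_maps_are_isometries (c p : ℝ) (w q : ℂ) (hw : ‖w‖ = 1)
    (F : ℝ × ℝ × ℂ → ℝ × ℝ × ℂ)
    (hF : ∀ (ϑ ξ : ℝ) (u : ℂ),
      F (ϑ, ξ, u) = (ϑ + 2 * c, Real.exp c * ξ + p, (Real.exp (-c) : ℂ) * w * u + q))
    (L : ℝ × ℝ × ℂ →L[ℝ] ℝ × ℝ × ℂ)
    (hL : ∀ (a b : ℝ) (z : ℂ),
      L (a, b, z) = (a, Real.exp c * b, (Real.exp (-c) : ℂ) * w * z))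
    (g : ℝ × ℝ × ℂ → (ℝ × ℝ × ℂ) → (ℝ × ℝ × ℂ) → ℝ)
    (hg : ∀ x v v' : ℝ × ℝ × ℂ,
      g x v v' = v.1 * v'.1 + Real.exp (-x.1) * v.2.1 * v'.2.1
        + Real.exp x.1 * (v.2.2 * (starRingEnd ℂ) v'.2.2).re) :
    (∀ x : ℝ × ℝ × ℂ, HasFDerivAt F L x) ∧
    (∀ (x : ℝ × ℝ × ℂ) (v v' : ℝ × ℝ × ℂ), g (F x) (L v) (L v') = g x v v') := by
  have hF_affine : F = fun x => L x + (2 * c, p, q) := by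
    funext ⟨ϑ, ξ, u⟩
    simp only [hF, hL, Prod.mk_add_mk]
  have hg_eps : g = epsMetric := by
    funext x v v'
    exact hg x v v'
  refine ⟨fun x => hF_affine ▸ L.hasFDerivAt.add_const _, ?_⟩
  rintro ⟨ϑ, ξ, u⟩ ⟨a, b, z⟩ ⟨a', b', z'⟩
  rw [hg_eps, hF, hL, hL]
  exact epsMetric_shift_scale c hw ϑ ξ _ u _ a b a' b' z z'
end

section
/- Let I ⊆ ℝ be a nonempty open interval, let α : I → ℝ be three times continuously differentiable with α(t) ≠ 0 and α'(t) ≠ 0 for every t ∈ I, and let b₀, b₁ ∈ ℝ be constants such that for every t ∈ I: α'''(t)/α'(t) − 4·α''(t)/α(t) + 4·α'(t)²/α(t)² = b₀ and α'''(t)/α'(t) − 2·α''(t)/α(t) = b₁. Then b₁ = −b₀ and, for every t ∈ I, α''(t) = b₀·α(t) and α'(t)² = b₀·α(t)². -/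
/-!
Subtracting the two equations eliminates `α'''` and leaves `α''α − 2α'² = c α²` with
`c = (b₁ − b₀)/2`. Differentiating gives `α'''α − 3α'α'' = 2c αα'`, i.e.
`α'''/α' − 3α''/α = b₁ − b₀`, and comparing with the second equation yields `α'' = b₀ α`.
Then `α''' = b₀ α'`, and substituting back into both equations gives `b₁ = −b₀` and
`α'² = b₀ α²`.
-/

open Set

section RatioIdentities

variable {x₀ x₁ x₂ x₃ b₀ b₁ : ℝ}

lemma mul_sub_two_sq_eq_of_ratio_identities (hx₀ : x₀ ≠ 0)
    (h0 : x₃ / x₁ - 4 * x₂ / x₀ + 4 * x₁ ^ 2 / x₀ ^ 2 = b₀)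
    (h1 : x₃ / x₁ - 2 * x₂ / x₀ = b₁) :
    x₂ * x₀ - 2 * x₁ ^ 2 = (b₁ - b₀) / 2 * x₀ ^ 2 := by
  have h : -2 * x₂ / x₀ + 4 * x₁ ^ 2 / x₀ ^ 2 = b₀ - b₁ := by linear_combination h0 - h1
  field_simp at h
  linear_combination -h / 2

lemma eq_mul_of_ratio_identity (hx₀ : x₀ ≠ 0) (hx₁ : x₁ ≠ 0)
    (h : x₃ * x₀ - 3 * x₁ * x₂ = 2 * ((b₁ - b₀) / 2) * x₀ * x₁)
    (h1 : x₃ / x₁ - 2 * x₂ / x₀ = b₁) :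
    x₂ = b₀ * x₀ := by
  field_simp at h1
  have hmul : x₂ * (x₀ * x₁) = b₀ * x₀ * (x₀ * x₁) := by linear_combination x₀ * h1 - x₀ * h
  exact mul_right_cancel₀ (mul_ne_zero hx₀ hx₁) hmul

lemma ratio_identities_of_eq_mul (hx₀ : x₀ ≠ 0) (hx₁ : x₁ ≠ 0)
    (h₂ : x₂ = b₀ * x₀) (h₃ : x₃ = b₀ * x₁)
    (h0 : x₃ / x₁ - 4 * x₂ / x₀ + 4 * x₁ ^ 2 / x₀ ^ 2 = b₀)
    (h1 : x₃ / x₁ - 2 * x₂ / x₀ = b₁) :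
    b₁ = -b₀ ∧ x₁ ^ 2 = b₀ * x₀ ^ 2 := by
  subst h₂ h₃
  field_simp at h0 h1
  constructor
  · linear_combination -h1
  · have hmul : x₁ ^ 2 * (4 * x₀) = b₀ * x₀ ^ 2 * (4 * x₀) := by linear_combination x₀ * h0
    exact mul_right_cancel₀ (by positivity) hmul

end RatioIdentities

lemma deriv3_mul_sub_eq_of_deriv2_mul_sub_eq {f : ℝ → ℝ} {s : Set ℝ} {c : ℝ} (hs : IsOpen s)
    (hf : DifferentiableOn ℝ f s) (hf' : DifferentiableOn ℝ (deriv f) s)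
    (hf'' : DifferentiableOn ℝ (deriv (deriv f)) s)
    (h : ∀ t ∈ s, deriv (deriv f) t * f t - 2 * deriv f t ^ 2 = c * f t ^ 2) :
    ∀ t ∈ s, deriv (deriv (deriv f)) t * f t - 3 * deriv f t * deriv (deriv f) t
      = 2 * c * f t * deriv f t := by
  intro t ht
  have hd := (hf.differentiableAt (hs.mem_nhds ht)).hasDerivAt
  have hd' := (hf'.differentiableAt (hs.mem_nhds ht)).hasDerivAt
  have hd'' := (hf''.differentiableAt (hs.mem_nhds ht)).hasDerivAt
  have hL : HasDerivAt (fun t => deriv (deriv f) t * f t - 2 * deriv f t ^ 2)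
      (deriv (deriv (deriv f)) t * f t - 3 * deriv f t * deriv (deriv f) t) t :=
    ((hd''.mul hd).sub ((hd'.pow 2).const_mul 2)).congr_deriv (by ring)
  have hR : HasDerivAt (fun t => c * f t ^ 2) (2 * c * f t * deriv f t) t :=
    ((hd.pow 2).const_mul c).congr_deriv (by ring)
  rw [← hL.deriv, ← hR.deriv]
  exact (show EqOn _ _ s from h).deriv hs ht

/-- If `α` is `C³` on a nonempty open interval with `α ≠ 0`, `α' ≠ 0`, and
`α'''/α' − 4α''/α + 4α'²/α² = b₀` and `α'''/α' − 2α''/α = b₁` for constants `b₀, b₁`,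
then `b₁ = −b₀`, `α'' = b₀·α` and `α'² = b₀·α²` on the interval. -/
theorem two_constant_ode_identities (a b b₀ b₁ : ℝ) (hab : a < b) (α : ℝ → ℝ)
    (hα : ContDiffOn ℝ 3 α (Set.Ioo a b))
    (hα0 : ∀ t ∈ Set.Ioo a b, α t ≠ 0)
    (hα1 : ∀ t ∈ Set.Ioo a b, deriv α t ≠ 0)
    (h0 : ∀ t ∈ Set.Ioo a b,
      deriv (deriv (deriv α)) t / deriv α t - 4 * deriv (deriv α) t / α t
        + 4 * (deriv α t) ^ 2 / (α t) ^ 2 = b₀)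
    (h1 : ∀ t ∈ Set.Ioo a b,
      deriv (deriv (deriv α)) t / deriv α t - 2 * deriv (deriv α) t / α t = b₁) :
    b₁ = -b₀ ∧ ∀ t ∈ Set.Ioo a b,
      deriv (deriv α) t = b₀ * α t ∧ (deriv α t) ^ 2 = b₀ * (α t) ^ 2 := by
  have hs : IsOpen (Ioo a b) := isOpen_Ioo
  have hα' : ContDiffOn ℝ 2 (deriv α) (Ioo a b) := hα.deriv_of_isOpen hs (by norm_num)
  have hα'' : ContDiffOn ℝ 1 (deriv (deriv α)) (Ioo a b) := hα'.deriv_of_isOpen hs (by norm_num)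
  have hdiff := deriv3_mul_sub_eq_of_deriv2_mul_sub_eq hs (hα.differentiableOn (by norm_num))
    (hα'.differentiableOn (by norm_num)) (hα''.differentiableOn one_ne_zero)
    fun t ht => mul_sub_two_sq_eq_of_ratio_identities (hα0 t ht) (h0 t ht) (h1 t ht)
  have h₂ : ∀ t ∈ Ioo a b, deriv (deriv α) t = b₀ * α t := fun t ht =>
    eq_mul_of_ratio_identity (hα0 t ht) (hα1 t ht) (hdiff t ht) (h1 t ht)
  have h₃ : ∀ t ∈ Ioo a b, deriv (deriv (deriv α)) t = b₀ * deriv α t := fun t ht => by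
    rw [(show EqOn _ (fun t => b₀ * α t) _ from h₂).deriv hs ht, deriv_const_mul_field']
  have key : ∀ t ∈ Ioo a b, b₁ = -b₀ ∧ deriv α t ^ 2 = b₀ * α t ^ 2 := fun t ht =>
    ratio_identities_of_eq_mul (hα0 t ht) (hα1 t ht) (h₂ t ht) (h₃ t ht) (h0 t ht) (h1 t ht)
  obtain ⟨t₀, ht₀⟩ : (Ioo a b).Nonempty := nonempty_Ioo.mpr hab
  exact ⟨(key t₀ ht₀).1, fun t ht => ⟨h₂ t ht, (key t ht).2⟩⟩
end

section
/- There do not exist nonempty open intervals I, J ⊆ ℝ and three times continuously differentiable functions α : I → ℝ and β : J → ℝ, with α(s) ≠ 0, α'(s) ≠ 0 for all s ∈ I and β(t) ≠ 0, β'(t) ≠ 0 for all t ∈ J, such that for all s ∈ I and t ∈ J both of the following hold: α'''(s)/α'(s) − 4·α''(s)/α(s) + 4·α'(s)²/α(s)² = −β'''(t)/β'(t) + 4·β''(t)/β(t) − 4·β'(t)²/β(t)², and α'''(s)/α'(s) − 2·α''(s)/α(s) = β'''(t)/β'(t) − 2·β''(t)/β(t). -/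
/-! Each side of either equation depends on only one variable, so all four sides are constant:
`F(α) = c`, `H(α) = d`, `F(β) = -c`, `H(β) = d`, with `F`, `H` the two left-hand sides.
For an admissible `α`, subtracting gives `2α''α = 4α'² - (c - d)α²`; differentiating this and
eliminating `α'''` with `H(α) = d` yields `α'' = cα`, hence `4α'² = (3c - d)α²`. Differentiating
once more forces `3c - d = 4c`, i.e. `c = -d`, and then `α'² = -dα²` gives `d < 0`.
For `β` the same argument gives `-c = -d`, so `d = 0`: a contradiction. -/

open Set Filter Topology

theorem ContDiffOn.hasDerivAt_deriv_of_isOpen {𝕜 F : Type*} [NontriviallyNormedField 𝕜]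
    [NormedAddCommGroup F] [NormedSpace 𝕜 F] {f : 𝕜 → F} {s : Set 𝕜} {n : WithTop ℕ∞}
    (hf : ContDiffOn 𝕜 n f s) (hs : IsOpen s) (hn : n ≠ 0) :
    ∀ x ∈ s, HasDerivAt f (deriv f x) x := fun _ hx =>
  ((hf.contDiffAt (hs.mem_nhds hx)).differentiableAt hn).hasDerivAt

theorem exists_const_of_forall_eq {ι κ R : Type*} {A : ι → R} {B : κ → R} {I : Set ι} {J : Set κ}
    (hI : I.Nonempty) (hJ : J.Nonempty) (h : ∀ s ∈ I, ∀ t ∈ J, A s = B t) :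
    ∃ c, (∀ s ∈ I, A s = c) ∧ ∀ t ∈ J, B t = c := by
  obtain ⟨s₀, hs₀⟩ := hI
  obtain ⟨t₀, ht₀⟩ := hJ
  exact ⟨B t₀, fun s hs => h s hs t₀ ht₀,
    fun t ht => (h s₀ hs₀ t ht).symm.trans (h s₀ hs₀ t₀ ht₀)⟩

theorem HasDerivAt.eq_zero_of_eventuallyEq_zero {𝕜 F : Type*} [NontriviallyNormedField 𝕜]
    [NormedAddCommGroup F] [NormedSpace 𝕜 F] {g : 𝕜 → F} {g' : F} {x : 𝕜}
    (hg : HasDerivAt g g' x) (h : g =ᶠ[𝓝 x] 0) : g' = 0 :=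
  (hg.congr_of_eventuallyEq h.symm).unique (hasDerivAt_const x 0)

section

variable {U : Set ℝ} {f f' f'' f''' : ℝ → ℝ} {c d k m : ℝ}

theorem second_deriv_eq_and_sq_deriv_eq (hU : IsOpen U)
    (hf : ∀ s ∈ U, HasDerivAt f (f' s) s) (hf' : ∀ s ∈ U, HasDerivAt f' (f'' s) s)
    (hf'' : ∀ s ∈ U, HasDerivAt f'' (f''' s) s) (hne : ∀ s ∈ U, f s ≠ 0 ∧ f' s ≠ 0)
    (hF : ∀ s ∈ U, f''' s / f' s - 4 * f'' s / f s + 4 * f' s ^ 2 / f s ^ 2 = c)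
    (hH : ∀ s ∈ U, f''' s / f' s - 2 * f'' s / f s = d) :
    ∀ s ∈ U, f'' s = c * f s ∧ 4 * (f' s * f' s) = (3 * c - d) * (f s * f s) := by
  have hdiff : ∀ s ∈ U, 2 * (f'' s * f s) - 4 * (f' s * f' s) + (c - d) * (f s * f s) = 0 := by
    intro s hs
    obtain ⟨h0, -⟩ := hne s hs
    have h : (f''' s / f' s - 4 * f'' s / f s + 4 * f' s ^ 2 / f s ^ 2)
        - (f''' s / f' s - 2 * f'' s / f s) = c - d := by rw [hF s hs, hH s hs]
    field_simp at h
    linear_combination -h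
  intro s hs
  obtain ⟨h0, h0'⟩ := hne s hs
  have hH' : f''' s * f s = d * (f' s * f s) + 2 * (f'' s * f' s) := by
    have h := hH s hs
    field_simp at h
    linear_combination h
  have hderiv := ((((hf'' s hs).mul (hf s hs)).const_mul 2).sub
    (((hf' s hs).mul (hf' s hs)).const_mul 4)).add (((hf s hs).mul (hf s hs)).const_mul (c - d))
    |>.eq_zero_of_eventuallyEq_zero <| by
      filter_upwards [hU.mem_nhds hs] with x hx using by simpa using hdiff x hx
  have h2 : f'' s = c * f s :=
    mul_right_cancel₀ h0' (by linear_combination (-1/2 : ℝ) * hderiv + hH')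
  exact ⟨h2, by linear_combination (-1 : ℝ) * hdiff s hs + 2 * f s * h2⟩

theorem eq_of_second_deriv_eq_and_sq_deriv_eq {x : ℝ}
    (hf : HasDerivAt f (f' x) x) (hf' : HasDerivAt f' (f'' x) x) (h0 : f x ≠ 0) (h0' : f' x ≠ 0)
    (h2 : f'' x = k * f x) (hsq : ∀ᶠ y in 𝓝 x, 4 * (f' y * f' y) = m * (f y * f y)) :
    m = 4 * k := by
  have hderiv := ((hf'.mul hf').const_mul 4).sub ((hf.mul hf).const_mul m)
    |>.eq_zero_of_eventuallyEq_zero <| by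
      filter_upwards [hsq] with y hy using by simpa [sub_eq_zero] using hy
  exact mul_right_cancel₀ (mul_ne_zero h0 h0')
    (by linear_combination (-1/2 : ℝ) * hderiv + 4 * f' x * h2)

theorem eq_neg_and_neg_of_invariants_eq_const {α : ℝ → ℝ} (hU : IsOpen U) (hU₀ : U.Nonempty)
    (hα : ContDiffOn ℝ 3 α U) (hne : ∀ s ∈ U, α s ≠ 0 ∧ deriv α s ≠ 0)
    (hF : ∀ s ∈ U, deriv (deriv (deriv α)) s / deriv α s - 4 * deriv (deriv α) s / α s
      + 4 * deriv α s ^ 2 / α s ^ 2 = c)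
    (hH : ∀ s ∈ U, deriv (deriv (deriv α)) s / deriv α s - 2 * deriv (deriv α) s / α s = d) :
    c = -d ∧ d < 0 := by
  have hα' := hα.deriv_of_isOpen hU (m := 2) (by norm_num)
  have hα'' := hα'.deriv_of_isOpen hU (m := 1) (by norm_num)
  have hD := hα.hasDerivAt_deriv_of_isOpen hU (by norm_num)
  have hD' := hα'.hasDerivAt_deriv_of_isOpen hU (by norm_num)
  have hD'' := hα''.hasDerivAt_deriv_of_isOpen hU (by norm_num)
  have hODE := second_deriv_eq_and_sq_deriv_eq hU hD hD' hD'' hne hF hH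
  obtain ⟨s, hs⟩ := hU₀
  obtain ⟨h0, h0'⟩ := hne s hs
  have hcd : 3 * c - d = 4 * c :=
    eq_of_second_deriv_eq_and_sq_deriv_eq (hD s hs) (hD' s hs) h0 h0'
      (hODE s hs).1 (eventually_of_mem (hU.mem_nhds hs) fun y hy => (hODE y hy).2)
  refine ⟨by linarith, ?_⟩
  have hsq := (hODE s hs).2
  rw [show 3 * c - d = -4 * d by linarith] at hsq
  nlinarith [mul_self_pos.2 h0, mul_self_pos.2 h0']

end

/-- There are no `C³` functions `α`, `β` on nonempty open intervals, with
`α, α'` and `β, β'` nowhere zero, satisfying simultaneously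
`α'''/α' − 4α''/α + 4α'²/α² = −β'''/β' + 4β''/β − 4β'²/β²` and
`α'''/α' − 2α''/α = β'''/β' − 2β''/β` for all pairs of points. -/
theorem no_separated_solutions :
    ¬ ∃ (a₁ a₂ b₁ b₂ : ℝ) (α β : ℝ → ℝ),
      a₁ < a₂ ∧ b₁ < b₂ ∧
      ContDiffOn ℝ 3 α (Set.Ioo a₁ a₂) ∧ ContDiffOn ℝ 3 β (Set.Ioo b₁ b₂) ∧
      (∀ s ∈ Set.Ioo a₁ a₂, α s ≠ 0 ∧ deriv α s ≠ 0) ∧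
      (∀ t ∈ Set.Ioo b₁ b₂, β t ≠ 0 ∧ deriv β t ≠ 0) ∧
      (∀ s ∈ Set.Ioo a₁ a₂, ∀ t ∈ Set.Ioo b₁ b₂,
        deriv (deriv (deriv α)) s / deriv α s - 4 * deriv (deriv α) s / α s
            + 4 * (deriv α s) ^ 2 / (α s) ^ 2
          = -(deriv (deriv (deriv β)) t) / deriv β t + 4 * deriv (deriv β) t / β t
            - 4 * (deriv β t) ^ 2 / (β t) ^ 2) ∧
      (∀ s ∈ Set.Ioo a₁ a₂, ∀ t ∈ Set.Ioo b₁ b₂,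
        deriv (deriv (deriv α)) s / deriv α s - 2 * deriv (deriv α) s / α s
          = deriv (deriv (deriv β)) t / deriv β t - 2 * deriv (deriv β) t / β t) := by
  rintro ⟨a₁, a₂, b₁, b₂, α, β, ha, hb, hα, hβ, hneα, hneβ, hF, hH⟩
  obtain ⟨c, hFα, hFβ⟩ := exists_const_of_forall_eq (nonempty_Ioo.2 ha) (nonempty_Ioo.2 hb) hF
  obtain ⟨d, hHα, hHβ⟩ := exists_const_of_forall_eq (nonempty_Ioo.2 ha) (nonempty_Ioo.2 hb) hH
  have hFβ' : ∀ t ∈ Ioo b₁ b₂, deriv (deriv (deriv β)) t / deriv β t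
      - 4 * deriv (deriv β) t / β t + 4 * deriv β t ^ 2 / β t ^ 2 = -c := fun t ht => by
    linear_combination -hFβ t ht
  obtain ⟨hcα, hd⟩ := eq_neg_and_neg_of_invariants_eq_const isOpen_Ioo (nonempty_Ioo.2 ha)
    hα hneα hFα hHα
  obtain ⟨hcβ, -⟩ := eq_neg_and_neg_of_invariants_eq_const isOpen_Ioo (nonempty_Ioo.2 hb)
    hβ hneβ hFβ' hHβ
  linarith
end

section
/- Let I, J ⊆ ℝ be nonempty open intervals and let α : I → ℝ and β : J → ℝ be smooth (C^∞) functions such that α'(s)·β'(t)·(α(s) + β(t)) ≠ 0 for all (s, t) ∈ I × J. Suppose that for all (s, t) ∈ I × J: (α(s) + β(t))²·(β'(t)·α'''(s) + α'(s)·β'''(t)) = 2·α'(s)·β'(t)·[(α(s) + β(t))·(α''(s) + β''(t)) − α'(s)² − β'(t)²]. Then there exists a constant k ∈ ℝ such that 2·α'''(s) = −k·α'(s) for all s ∈ I and 2·β'''(t) = k·β'(t) for all t ∈ J. -/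
open Set Filter

/-- If a real function has derivative `a` at `x` and vanishes near `x`, then `a = 0`. -/
lemma deriv_eq_zero_of_eventually_zero {F : ℝ → ℝ} {a x : ℝ} (hF : HasDerivAt F a x)
    (hev : ∀ᶠ y in nhds x, F y = 0) : a = 0 := by
  have h0 : HasDerivAt (fun _ : ℝ => (0 : ℝ)) a x :=
    hF.congr_of_eventuallyEq (by filter_upwards [hev] with y hy using hy.symm)
  exact h0.unique (hasDerivAt_const x 0)

/-- A function with zero derivative on an open interval is constant there. -/
lemma const_of_hasDerivAt_zero {f : ℝ → ℝ} {a b : ℝ}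
    (h : ∀ x ∈ Set.Ioo a b, HasDerivAt f 0 x) {x y : ℝ}
    (hx : x ∈ Set.Ioo a b) (hy : y ∈ Set.Ioo a b) : f x = f y := by
  refine (convex_Ioo a b).is_const_of_fderivWithin_eq_zero
    (fun z hz => (h z hz).differentiableAt.differentiableWithinAt) (fun z hz => ?_) hx hy
  rw [fderivWithin_of_isOpen isOpen_Ioo hz]
  have h0 : (ContinuousLinearMap.toSpanSingleton ℝ (0 : ℝ)) = 0 := by
    ext; simp
  have := (h z hz).hasFDerivAt
  rw [h0] at this
  exact this.fderiv

/-- If smooth functions `α`, `β` on nonempty open intervals satisfy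
`α'·β'·(α + β) ≠ 0` everywhere and the functional equation
`(α+β)²(β'α''' + α'β''') = 2α'β'[(α+β)(α''+β'') − α'² − β'²]`,
then there is a constant `k` with `2α''' = −k·α'` and `2β''' = k·β'`. -/
theorem separated_third_order_from_functional_equation
    (a₁ a₂ b₁ b₂ : ℝ) (ha : a₁ < a₂) (hb : b₁ < b₂) (α β : ℝ → ℝ)
    (hα : ContDiffOn ℝ (⊤ : ℕ∞) α (Set.Ioo a₁ a₂)) (hβ : ContDiffOn ℝ (⊤ : ℕ∞) β (Set.Ioo b₁ b₂))
    (hne : ∀ s ∈ Set.Ioo a₁ a₂, ∀ t ∈ Set.Ioo b₁ b₂,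
      deriv α s * deriv β t * (α s + β t) ≠ 0)
    (heq : ∀ s ∈ Set.Ioo a₁ a₂, ∀ t ∈ Set.Ioo b₁ b₂,
      (α s + β t) ^ 2 *
          (deriv β t * deriv (deriv (deriv α)) s + deriv α s * deriv (deriv (deriv β)) t)
        = 2 * deriv α s * deriv β t *
            ((α s + β t) * (deriv (deriv α) s + deriv (deriv β) t)
              - (deriv α s) ^ 2 - (deriv β t) ^ 2)) :
    ∃ k : ℝ,
      (∀ s ∈ Set.Ioo a₁ a₂, 2 * deriv (deriv (deriv α)) s = -k * deriv α s) ∧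
      (∀ t ∈ Set.Ioo b₁ b₂, 2 * deriv (deriv (deriv β)) t = k * deriv β t) := by
  -- interval facts
  have hs₀ : (a₁ + a₂) / 2 ∈ Set.Ioo a₁ a₂ := ⟨by linarith, by linarith⟩
  have ht₀ : (b₁ + b₂) / 2 ∈ Set.Ioo b₁ b₂ := ⟨by linarith, by linarith⟩
  set s₀ := (a₁ + a₂) / 2
  set t₀ := (b₁ + b₂) / 2
  -- smoothness chain
  have chain : ∀ (f : ℝ → ℝ) (c d : ℝ), ContDiffOn ℝ (⊤ : ℕ∞) f (Set.Ioo c d) →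
      (∀ x ∈ Set.Ioo c d, HasDerivAt f (deriv f x) x) ∧
        ContDiffOn ℝ (⊤ : ℕ∞) (deriv f) (Set.Ioo c d) := by
    intro f c d hf
    constructor
    · intro x hx
      exact ((hf.differentiableOn (by simp)).differentiableAt
        (isOpen_Ioo.mem_nhds hx)).hasDerivAt
    · exact hf.deriv_of_isOpen isOpen_Ioo (by simp)
  obtain ⟨hdα, hα1⟩ := chain α a₁ a₂ hα
  obtain ⟨hdα1, hα2⟩ := chain _ a₁ a₂ hα1
  obtain ⟨hdα2, hα3⟩ := chain _ a₁ a₂ hα2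
  obtain ⟨hdα3, -⟩ := chain _ a₁ a₂ hα3
  obtain ⟨hdβ, hβ1⟩ := chain β b₁ b₂ hβ
  obtain ⟨hdβ1, hβ2⟩ := chain _ b₁ b₂ hβ1
  obtain ⟨hdβ2, hβ3⟩ := chain _ b₁ b₂ hβ2
  obtain ⟨hdβ3, -⟩ := chain _ b₁ b₂ hβ3
  -- nonvanishing
  have hA1 : ∀ s ∈ Set.Ioo a₁ a₂, deriv α s ≠ 0 := fun s hs => by
    have := hne s hs t₀ ht₀; intro h; apply this; rw [h]; ring
  have hB1 : ∀ t ∈ Set.Ioo b₁ b₂, deriv β t ≠ 0 := fun t ht => by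
    have := hne s₀ hs₀ t ht; intro h; apply this; rw [h]; ring
  have hAB : ∀ s ∈ Set.Ioo a₁ a₂, ∀ t ∈ Set.Ioo b₁ b₂, α s + β t ≠ 0 := fun s hs t ht => by
    have := hne s hs t ht; intro h; apply this; rw [h]; ring
  -- divided quantities
  set u : ℝ → ℝ := fun s => deriv (deriv (deriv α)) s / deriv α s with hu_def
  set v : ℝ → ℝ := fun t => deriv (deriv (deriv β)) t / deriv β t with hv_def
  have huA : ∀ s ∈ Set.Ioo a₁ a₂, deriv (deriv (deriv α)) s = u s * deriv α s :=
    fun s hs => (div_mul_cancel₀ _ (hA1 s hs)).symm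
  have hvB : ∀ t ∈ Set.Ioo b₁ b₂, deriv (deriv (deriv β)) t = v t * deriv β t :=
    fun t ht => (div_mul_cancel₀ _ (hB1 t ht)).symm
  have hdu : ∀ s ∈ Set.Ioo a₁ a₂, HasDerivAt u (deriv u s) s := by
    intro s hs
    have h := (hdα3 s hs).fun_div (hdα1 s hs) (hA1 s hs)
    rw [h.deriv]; exact h
  have hdv : ∀ t ∈ Set.Ioo b₁ b₂, HasDerivAt v (deriv v t) t := by
    intro t ht
    have h := (hdβ3 t ht).fun_div (hdβ1 t ht) (hB1 t ht)
    rw [h.deriv]; exact h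
  -- divided functional equation
  have heq' : ∀ s ∈ Set.Ioo a₁ a₂, ∀ t ∈ Set.Ioo b₁ b₂,
      (α s + β t) ^ 2 * (u s + v t)
        - 2 * (α s + β t) * (deriv (deriv α) s + deriv (deriv β) t)
        + 2 * (deriv α s) ^ 2 + 2 * (deriv β t) ^ 2 = 0 := by
    intro s hs t ht
    have h := heq s hs t ht
    have h1 := hA1 s hs
    have h2 := hB1 t ht
    rw [hu_def, hv_def]
    field_simp
    linear_combination h
  -- step (I')
  have hI' : ∀ s ∈ Set.Ioo a₁ a₂, ∀ t ∈ Set.Ioo b₁ b₂,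
      2 * deriv α s * (α s + β t) * v t + (α s + β t) ^ 2 * deriv u s
        + 2 * deriv α s * deriv (deriv α) s - 2 * deriv α s * deriv (deriv β) t = 0 := by
    intro s hs t ht
    have h1 : HasDerivAt (fun x => α x + β t) (deriv α s) s := (hdα s hs).add_const _
    have h2 : HasDerivAt (fun x => (α x + β t) ^ 2) (2 * (α s + β t) * deriv α s) s := by
      simpa [mul_comm, mul_assoc, mul_left_comm] using h1.fun_pow 2
    have h3 : HasDerivAt (fun x => u x + v t) (deriv u s) s := (hdu s hs).add_const _
    have h4 := h2.fun_mul h3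
    have h5 : HasDerivAt (fun x => 2 * (α x + β t) * (deriv (deriv α) x + deriv (deriv β) t))
        (2 * deriv α s * (deriv (deriv α) s + deriv (deriv β) t)
          + 2 * (α s + β t) * deriv (deriv (deriv α)) s) s := by
      exact (h1.const_mul 2).mul ((hdα2 s hs).add_const (deriv (deriv β) t))
    have h6 : HasDerivAt (fun x => 2 * (deriv α x) ^ 2) (4 * deriv α s * deriv (deriv α) s) s := by
      have := ((hdα1 s hs).fun_pow 2).const_mul 2
      convert this using 1
      all_goals first | rfl | ring
    have hF := ((h4.sub h5).add h6).add_const (2 * (deriv β t) ^ 2)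
    have hz : (2 * (α s + β t) * deriv α s * (u s + v t) + (α s + β t) ^ 2 * deriv u s
        - (2 * deriv α s * (deriv (deriv α) s + deriv (deriv β) t)
            + 2 * (α s + β t) * deriv (deriv (deriv α)) s)
        + 4 * deriv α s * deriv (deriv α) s) = 0 := by
      refine deriv_eq_zero_of_eventually_zero hF ?_
      filter_upwards [isOpen_Ioo.mem_nhds hs] with y hy using heq' y hy t ht
    linear_combination hz + 2 * (α s + β t) * huA s hs
  -- step (II')
  have hII' : ∀ s ∈ Set.Ioo a₁ a₂, ∀ t ∈ Set.Ioo b₁ b₂,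
      deriv α s * deriv v t + deriv β t * deriv u s = 0 := by
    intro s hs t ht
    have h1 : HasDerivAt (fun y => α s + β y) (deriv β t) t := (hdβ t ht).const_add _
    have h2 : HasDerivAt (fun y => 2 * deriv α s * (α s + β y) * v y)
        (2 * deriv α s * (α s + β t) * deriv v t + 2 * deriv α s * deriv β t * v t) t := by
      have := ((h1.const_mul (2 * deriv α s)).fun_mul (hdv t ht))
      convert this using 1
      all_goals first | rfl | ring
    have h3 : HasDerivAt (fun y => (α s + β y) ^ 2 * deriv u s)
        (2 * (α s + β t) * deriv β t * deriv u s) t := by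
      have := (h1.fun_pow 2).mul_const (deriv u s)
      convert this using 1
      all_goals first | rfl | ring
    have h4 : HasDerivAt (fun y => 2 * deriv α s * deriv (deriv β) y)
        (2 * deriv α s * deriv (deriv (deriv β)) t) t := (hdβ2 t ht).const_mul _
    have hG := ((h2.fun_add h3).add_const (2 * deriv α s * deriv (deriv α) s)).fun_sub h4
    have hz : (2 * deriv α s * (α s + β t) * deriv v t + 2 * deriv α s * deriv β t * v t
        + 2 * (α s + β t) * deriv β t * deriv u s
        - 2 * deriv α s * deriv (deriv (deriv β)) t) = 0 := by
      refine deriv_eq_zero_of_eventually_zero hG ?_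
      filter_upwards [isOpen_Ioo.mem_nhds ht] with y hy
      have := hI' s hs y hy
      linarith
    have key : (α s + β t) * (deriv α s * deriv v t + deriv β t * deriv u s) = 0 := by
      linear_combination hz / 2 + deriv α s * hvB t ht
    exact (mul_eq_zero.mp key).resolve_left (hAB s hs t ht)
  -- separation constant c
  set c : ℝ := -(deriv v t₀) / deriv β t₀ with hc_def
  have hU : ∀ s ∈ Set.Ioo a₁ a₂, deriv u s = c * deriv α s := by
    intro s hs
    have h := hII' s hs t₀ ht₀
    have hb0 := hB1 t₀ ht₀
    rw [hc_def, div_mul_eq_mul_div, eq_div_iff hb0]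
    linear_combination h
  have hV : ∀ t ∈ Set.Ioo b₁ b₂, deriv v t = -c * deriv β t := by
    intro t ht
    have h := hII' s₀ hs₀ t ht
    have ha0 := hA1 s₀ hs₀
    have hU0 := hU s₀ hs₀
    rw [hU0] at h
    have : deriv α s₀ * (deriv v t + c * deriv β t) = 0 := by linear_combination h
    have := (mul_eq_zero.mp this).resolve_left ha0
    linarith
  -- u = c α + d, v = -c β + e
  set d : ℝ := u s₀ - c * α s₀ with hd_def
  set e : ℝ := v t₀ + c * β t₀ with he_def
  have hus : ∀ s ∈ Set.Ioo a₁ a₂, u s = c * α s + d := by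
    intro s hs
    have hconst : ∀ x ∈ Set.Ioo a₁ a₂, HasDerivAt (fun x => u x - c * α x) 0 x := by
      intro x hx
      have := (hdu x hx).fun_sub ((hdα x hx).const_mul c)
      rw [hU x hx] at this
      simpa using this
    have := const_of_hasDerivAt_zero hconst hs hs₀
    rw [hd_def]; linarith
  have hvt : ∀ t ∈ Set.Ioo b₁ b₂, v t = -c * β t + e := by
    intro t ht
    have hconst : ∀ x ∈ Set.Ioo b₁ b₂, HasDerivAt (fun x => v x + c * β x) 0 x := by
      intro x hx
      have := (hdv x hx).fun_add ((hdβ x hx).const_mul c)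
      rw [hV x hx] at this
      simpa using this
    have := const_of_hasDerivAt_zero hconst ht ht₀
    rw [he_def]; linarith
  -- the separated second-order relation
  set m : ℝ := c * (β t₀) ^ 2 - 2 * e * β t₀ + 2 * deriv (deriv β) t₀ with hm_def
  have hm : ∀ s ∈ Set.Ioo a₁ a₂,
      2 * deriv (deriv α) s = m - c * (α s) ^ 2 - 2 * e * α s := by
    intro s hs
    have h := hI' s hs t₀ ht₀
    rw [hU s hs, hvt t₀ ht₀] at h
    have ha0 := hA1 s hs
    apply mul_left_cancel₀ ha0
    linear_combination h + deriv α s * hm_def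
  -- differentiate it: (2cα + d + e) ≡ 0
  have hde : ∀ s ∈ Set.Ioo a₁ a₂, 2 * c * α s + d + e = 0 := by
    intro s hs
    have h1 : HasDerivAt (fun x => 2 * deriv (deriv α) x - m + c * (α x) ^ 2 + 2 * e * α x)
        (2 * deriv (deriv (deriv α)) s + 2 * c * α s * deriv α s + 2 * e * deriv α s) s := by
      have := (((hdα2 s hs).const_mul 2).sub_const m).fun_add
        (((hdα s hs).fun_pow 2).const_mul c) |>.fun_add ((hdα s hs).const_mul (2 * e))
      convert this using 1
      all_goals first | rfl | ring
    have hz : 2 * deriv (deriv (deriv α)) s + 2 * c * α s * deriv α s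
        + 2 * e * deriv α s = 0 := by
      refine deriv_eq_zero_of_eventually_zero h1 ?_
      filter_upwards [isOpen_Ioo.mem_nhds hs] with y hy
      have := hm y hy
      linarith
    have key : deriv α s * (2 * (2 * c * α s + d + e)) = 0 := by
      linear_combination hz - 2 * huA s hs - 2 * deriv α s * hus s hs
    have := (mul_eq_zero.mp key).resolve_left (hA1 s hs)
    linarith
  -- differentiate again: c = 0
  have hc0 : c = 0 := by
    have h1 : HasDerivAt (fun x => 2 * c * α x + d + e) (2 * c * deriv α s₀) s₀ :=
      (((hdα s₀ hs₀).const_mul (2 * c)).add_const _).add_const _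
    have hz : 2 * c * deriv α s₀ = 0 := by
      refine deriv_eq_zero_of_eventually_zero h1 ?_
      filter_upwards [isOpen_Ioo.mem_nhds hs₀] with y hy using hde y hy
    rcases mul_eq_zero.mp hz with h | h
    · linarith
    · exact absurd h (hA1 s₀ hs₀)
  have hde0 : d = -e := by
    have := hde s₀ hs₀
    rw [hc0] at this
    linarith
  -- conclusion
  refine ⟨2 * e, fun s hs => ?_, fun t ht => ?_⟩
  · have h1 := huA s hs
    have h2 := hus s hs
    rw [hc0, hde0] at h2
    rw [h1, h2]
    ring
  · have h1 := hvB t ht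
    have h2 := hvt t ht
    rw [hc0] at h2
    rw [h1, h2]
    ring
end

section
/- Let I, J ⊆ ℝ be nonempty open intervals, let α : I → ℝ and β : J → ℝ be smooth (C^∞) functions, and let γ ∈ ℝ, such that α(s)·α'(s)·β'(t)·(α(s)·β(t) + γ) ≠ 0 for all (s, t) ∈ I × J, and such that the function t ↦ β'''(t)/β'(t) is nonconstant on J. If for all (s, t) ∈ I × J: α'''(s)/α'(s) − 4·α''(s)·β(t)/(α(s)·β(t) + γ) + 4·α'(s)²·β(t)²/(α(s)·β(t) + γ)² = −β'''(t)/β'(t) + 4·α(s)·β''(t)/(α(s)·β(t) + γ) − 4·α(s)²·β'(t)²/(α(s)·β(t) + γ)², then γ = 0. -/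
/-- If smooth functions `α`, `β` on nonempty open intervals satisfy
`α·α'·β'·(αβ + γ) ≠ 0` everywhere, `β'''/β'` is nonconstant, and
`α'''/α' − 4α''β/(αβ+γ) + 4α'²β²/(αβ+γ)² = −β'''/β' + 4αβ''/(αβ+γ) − 4α²β'²/(αβ+γ)²`,
then the constant `γ` is zero. -/
theorem mixed_separation_forces_gamma_zero
    (a₁ a₂ b₁ b₂ γ : ℝ) (ha : a₁ < a₂) (hb : b₁ < b₂) (α β : ℝ → ℝ)
    (hα : ContDiffOn ℝ (⊤ : ℕ∞) α (Set.Ioo a₁ a₂)) (hβ : ContDiffOn ℝ (⊤ : ℕ∞) β (Set.Ioo b₁ b₂))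
    (hne : ∀ s ∈ Set.Ioo a₁ a₂, ∀ t ∈ Set.Ioo b₁ b₂,
      α s * deriv α s * deriv β t * (α s * β t + γ) ≠ 0)
    (hnc : ¬ ∃ C : ℝ, ∀ t ∈ Set.Ioo b₁ b₂,
      deriv (deriv (deriv β)) t / deriv β t = C)
    (heq : ∀ s ∈ Set.Ioo a₁ a₂, ∀ t ∈ Set.Ioo b₁ b₂,
      deriv (deriv (deriv α)) s / deriv α s
          - 4 * deriv (deriv α) s * β t / (α s * β t + γ)
          + 4 * (deriv α s) ^ 2 * (β t) ^ 2 / (α s * β t + γ) ^ 2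
        = -(deriv (deriv (deriv β)) t) / deriv β t
          + 4 * α s * deriv (deriv β) t / (α s * β t + γ)
          - 4 * (α s) ^ 2 * (deriv β t) ^ 2 / (α s * β t + γ) ^ 2) :
    γ = 0 := by
  by_contra hγ0
  have hIo : IsOpen (Set.Ioo a₁ a₂) := isOpen_Ioo
  have hJo : IsOpen (Set.Ioo b₁ b₂) := isOpen_Ioo
  have hα1 : ContDiffOn ℝ (⊤ : ℕ∞) (deriv α) (Set.Ioo a₁ a₂) := hα.deriv_of_isOpen hIo (by simp)
  have hα2 : ContDiffOn ℝ (⊤ : ℕ∞) (deriv (deriv α)) (Set.Ioo a₁ a₂) := hα1.deriv_of_isOpen hIo (by simp)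
  have hα3 : ContDiffOn ℝ (⊤ : ℕ∞) (deriv (deriv (deriv α))) (Set.Ioo a₁ a₂) :=
    hα2.deriv_of_isOpen hIo (by simp)
  have hβ1 : ContDiffOn ℝ (⊤ : ℕ∞) (deriv β) (Set.Ioo b₁ b₂) := hβ.deriv_of_isOpen hJo (by simp)
  have hβ2 : ContDiffOn ℝ (⊤ : ℕ∞) (deriv (deriv β)) (Set.Ioo b₁ b₂) := hβ1.deriv_of_isOpen hJo (by simp)
  have hβ3 : ContDiffOn ℝ (⊤ : ℕ∞) (deriv (deriv (deriv β))) (Set.Ioo b₁ b₂) :=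
    hβ2.deriv_of_isOpen hJo (by simp)
  have hda0 : ∀ s ∈ Set.Ioo a₁ a₂, HasDerivAt α (deriv α s) s := fun s hs =>
    ((hα.differentiableOn (by simp)).differentiableAt (hIo.mem_nhds hs)).hasDerivAt
  have hda1 : ∀ s ∈ Set.Ioo a₁ a₂, HasDerivAt (deriv α) (deriv (deriv α) s) s := fun s hs =>
    ((hα1.differentiableOn (by simp)).differentiableAt (hIo.mem_nhds hs)).hasDerivAt
  have hda2 : ∀ s ∈ Set.Ioo a₁ a₂, HasDerivAt (deriv (deriv α)) (deriv (deriv (deriv α)) s) s :=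
    fun s hs => ((hα2.differentiableOn (by simp)).differentiableAt (hIo.mem_nhds hs)).hasDerivAt
  have hda3 : ∀ s ∈ Set.Ioo a₁ a₂,
      HasDerivAt (deriv (deriv (deriv α))) (deriv (deriv (deriv (deriv α))) s) s :=
    fun s hs => ((hα3.differentiableOn (by simp)).differentiableAt (hIo.mem_nhds hs)).hasDerivAt
  have hdb0 : ∀ t ∈ Set.Ioo b₁ b₂, HasDerivAt β (deriv β t) t := fun t ht =>
    ((hβ.differentiableOn (by simp)).differentiableAt (hJo.mem_nhds ht)).hasDerivAt
  have hdb1 : ∀ t ∈ Set.Ioo b₁ b₂, HasDerivAt (deriv β) (deriv (deriv β) t) t := fun t ht =>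
    ((hβ1.differentiableOn (by simp)).differentiableAt (hJo.mem_nhds ht)).hasDerivAt
  have hdb2 : ∀ t ∈ Set.Ioo b₁ b₂, HasDerivAt (deriv (deriv β)) (deriv (deriv (deriv β)) t) t :=
    fun t ht => ((hβ2.differentiableOn (by simp)).differentiableAt (hJo.mem_nhds ht)).hasDerivAt
  have hdb3 : ∀ t ∈ Set.Ioo b₁ b₂,
      HasDerivAt (deriv (deriv (deriv β))) (deriv (deriv (deriv (deriv β))) t) t :=
    fun t ht => ((hβ3.differentiableOn (by simp)).differentiableAt (hJo.mem_nhds ht)).hasDerivAt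
  have hnz : ∀ s ∈ Set.Ioo a₁ a₂, ∀ t ∈ Set.Ioo b₁ b₂,
      α s ≠ 0 ∧ deriv α s ≠ 0 ∧ deriv β t ≠ 0 ∧ α s * β t + γ ≠ 0 := by
    intro s hs t ht
    have h := hne s hs t ht
    exact ⟨fun e => h (by rw [e]; ring), fun e => h (by rw [e]; ring),
      fun e => h (by rw [e]; ring), fun e => h (by rw [e]; ring)⟩
  have hP : ∀ s ∈ Set.Ioo a₁ a₂, ∀ t ∈ Set.Ioo b₁ b₂,
      (deriv (deriv (deriv α)) s * deriv β t + deriv α s * deriv (deriv (deriv β)) t) * (α s * β t + γ) ^ 2 - 4 * (deriv α s * deriv β t * ((deriv (deriv α) s * β t + α s * deriv (deriv β) t) * (α s * β t + γ))) + 4 * (deriv α s * deriv β t * (deriv α s ^ 2 * β t ^ 2 + α s ^ 2 * deriv β t ^ 2)) = 0 := by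
    intro s hs t ht
    obtain ⟨h0, h1, h2, h3⟩ := hnz s hs t ht
    have h := heq s hs t ht
    have h3' : β t * α s + γ ≠ 0 := by rw [mul_comm]; exact h3
    field_simp at h
    have h4 : ((deriv (deriv (deriv α)) s * deriv β t + deriv α s * deriv (deriv (deriv β)) t) * (α s * β t + γ) ^ 2 - 4 * (deriv α s * deriv β t * ((deriv (deriv α) s * β t + α s * deriv (deriv β) t) * (α s * β t + γ))) + 4 * (deriv α s * deriv β t * (deriv α s ^ 2 * β t ^ 2 + α s ^ 2 * deriv β t ^ 2))) * (α s * β t + γ) ^ 4 = 0 := by linear_combination (α s * β t + γ) ^ 4 * h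
    exact (mul_eq_zero.mp h4).resolve_right (pow_ne_zero 4 h3)
  have hPs : ∀ s ∈ Set.Ioo a₁ a₂, ∀ t ∈ Set.Ioo b₁ b₂,
      (deriv (deriv (deriv (deriv α))) s * γ ^ 2) * deriv β t + (deriv (deriv α) s * γ ^ 2) * deriv (deriv (deriv β)) t + ((-4) * deriv (deriv α) s ^ 2 * γ + (-2) * deriv α s * deriv (deriv (deriv α)) s * γ + 2 * α s * deriv (deriv (deriv (deriv α))) s * γ) * (β t * deriv β t) + ((-4) * deriv α s ^ 2 * γ + (-4) * α s * deriv (deriv α) s * γ) * (deriv β t * deriv (deriv β) t) + (2 * deriv α s ^ 2 * γ + 2 * α s * deriv (deriv α) s * γ) * (β t * deriv (deriv (deriv β)) t) + (8 * deriv α s ^ 2 * deriv (deriv α) s + (-4) * α s * deriv (deriv α) s ^ 2 + (-2) * α s * deriv α s * deriv (deriv (deriv α)) s + α s ^ 2 * deriv (deriv (deriv (deriv α))) s) * (β t ^ 2 * deriv β t) + (8 * α s * deriv α s ^ 2 + 4 * α s ^ 2 * deriv (deriv α) s) * deriv β t ^ 3 + ((-8) * α s * deriv α s ^ 2 + (-4)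 * α s ^ 2 * deriv (deriv α) s) * (β t * (deriv β t * deriv (deriv β) t)) + (2 * α s * deriv α s ^ 2 + α s ^ 2 * deriv (deriv α) s) * (β t ^ 2 * deriv (deriv (deriv β)) t) = 0 := by
    intro s hs t ht
    have k0 := hda0 s hs
    have k1 := hda1 s hs
    have k2 := hda2 s hs
    have k3 := hda3 s hs
    have chain := ((((k3.mul_const (deriv β t)).add
        (k1.mul_const (deriv (deriv (deriv β)) t))).mul
        (((k0.mul_const (β t)).add_const γ).pow 2)).sub
        (((k1.mul_const (deriv β t)).mul
          (((k2.mul_const (β t)).add (k0.mul_const (deriv (deriv β) t))).mul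
            ((k0.mul_const (β t)).add_const γ))).const_mul 4)).add
        (((k1.mul_const (deriv β t)).mul
          (((k1.pow 2).mul_const (β t ^ 2)).add
            ((k0.pow 2).mul_const (deriv β t ^ 2)))).const_mul 4)
    have hz : HasDerivAt (fun x => (deriv (deriv (deriv α)) x * deriv β t + deriv α x * deriv (deriv (deriv β)) t) * (α x * β t + γ) ^ 2 - 4 * (deriv α x * deriv β t * ((deriv (deriv α) x * β t + α x * deriv (deriv β) t) * (α x * β t + γ))) + 4 * (deriv α x * deriv β t * (deriv α x ^ 2 * β t ^ 2 + α x ^ 2 * deriv β t ^ 2))) 0 s :=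
      (hasDerivAt_const s 0).congr_of_eventuallyEq
        (Filter.eventuallyEq_of_mem (hIo.mem_nhds hs) fun x hx => hP x hx t ht)
    have hu := chain.unique hz
    simp only [Pi.add_apply, Pi.sub_apply, Pi.mul_apply, Pi.pow_apply] at hu
    linear_combination hu
  have hS : ∀ s ∈ Set.Ioo a₁ a₂, ∀ t ∈ Set.Ioo b₁ b₂,
      deriv (deriv (deriv α)) s * deriv β t + deriv α s * deriv (deriv (deriv β)) t = 0 := by
    intro s hs t ht
    obtain ⟨h0, h1, h2, h3⟩ := hnz s hs t ht
    have l0 := hdb0 t ht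
    have l1 := hdb1 t ht
    have l2 := hdb2 t ht
    have l3 := hdb3 t ht
    have chainT := ((((l1.const_mul (deriv (deriv (deriv α)) s)).add
        (l3.const_mul (deriv α s))).mul
        (((l0.const_mul (α s)).add_const γ).pow 2)).sub
        (((l1.const_mul (deriv α s)).mul
          (((l0.const_mul (deriv (deriv α) s)).add (l2.const_mul (α s))).mul
            ((l0.const_mul (α s)).add_const γ))).const_mul 4)).add
        (((l1.const_mul (deriv α s)).mul
          (((l0.pow 2).const_mul (deriv α s ^ 2)).add
            ((l1.pow 2).const_mul (α s ^ 2)))).const_mul 4)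
    have hzT : HasDerivAt (fun y => (deriv (deriv (deriv α)) s * deriv β y + deriv α s * deriv (deriv (deriv β)) y) * (α s * β y + γ) ^ 2 - 4 * (deriv α s * deriv β y * ((deriv (deriv α) s * β y + α s * deriv (deriv β) y) * (α s * β y + γ))) + 4 * (deriv α s * deriv β y * (deriv α s ^ 2 * β y ^ 2 + α s ^ 2 * deriv β y ^ 2))) 0 t :=
      (hasDerivAt_const t 0).congr_of_eventuallyEq
        (Filter.eventuallyEq_of_mem (hJo.mem_nhds ht) fun y hy => hP s hs y hy)
    have huT := chainT.unique hzT
    have chainS := ((((((((l1.const_mul (deriv (deriv (deriv (deriv α))) s * γ ^ 2)).add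
        (l3.const_mul (deriv (deriv α) s * γ ^ 2))).add
        ((l0.mul l1).const_mul ((-4) * deriv (deriv α) s ^ 2 * γ + (-2) * deriv α s * deriv (deriv (deriv α)) s * γ + 2 * α s * deriv (deriv (deriv (deriv α))) s * γ))).add
        ((l1.mul l2).const_mul ((-4) * deriv α s ^ 2 * γ + (-4) * α s * deriv (deriv α) s * γ))).add
        ((l0.mul l3).const_mul (2 * deriv α s ^ 2 * γ + 2 * α s * deriv (deriv α) s * γ))).add
        (((l0.pow 2).mul l1).const_mul (8 * deriv α s ^ 2 * deriv (deriv α) s + (-4) * α s * deriv (deriv α) s ^ 2 + (-2) * α s * deriv α s * deriv (deriv (deriv α)) s + α s ^ 2 * deriv (deriv (deriv (deriv α))) s))).add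
        ((l1.pow 3).const_mul (8 * α s * deriv α s ^ 2 + 4 * α s ^ 2 * deriv (deriv α) s))).add
        ((l0.mul (l1.mul l2)).const_mul ((-8) * α s * deriv α s ^ 2 + (-4) * α s ^ 2 * deriv (deriv α) s))).add
        (((l0.pow 2).mul l3).const_mul (2 * α s * deriv α s ^ 2 + α s ^ 2 * deriv (deriv α) s))
    have hzS : HasDerivAt (fun y => (deriv (deriv (deriv (deriv α))) s * γ ^ 2) * deriv β y + (deriv (deriv α) s * γ ^ 2) * deriv (deriv (deriv β)) y + ((-4) * deriv (deriv α) s ^ 2 * γ + (-2) * deriv α s * deriv (deriv (deriv α)) s * γ + 2 * α s * deriv (deriv (deriv (deriv α))) s * γ) * (β y * deriv β y) + ((-4) * deriv α s ^ 2 * γ + (-4) * α s * deriv (deriv α) s * γ) * (deriv β y * deriv (deriv β) y) + (2 * deriv α s ^ 2 * γ + 2 * α s * deriv (deriv α) s * γ) * (β y * deriv (deriv (deriv β)) y) + (8 * deriv α s ^ 2 * deriv (deriv α) s + (-4) * α s * deriv (deriv α) s ^ 2 + (-2) * α s * deriv α s * deriv (deriv (deriv α)) s + α s ^ 2 * deriv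 (deriv (deriv (deriv α))) s) * (β y ^ 2 * deriv β y) + (8 * α s * deriv α s ^ 2 + 4 * α s ^ 2 * deriv (deriv α) s) * deriv β y ^ 3 + ((-8) * α s * deriv α s ^ 2 + (-4) * α s ^ 2 * deriv (deriv α) s) * (β y * (deriv β y * deriv (deriv β) y)) + (2 * α s * deriv α s ^ 2 + α s ^ 2 * deriv (deriv α) s) * (β y ^ 2 * deriv (deriv (deriv β)) y)) 0 t :=
      (hasDerivAt_const t 0).congr_of_eventuallyEq
        (Filter.eventuallyEq_of_mem (hJo.mem_nhds ht) fun y hy => hPs s hs y hy)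
    have huS := chainS.unique hzS
    simp only [Pi.add_apply, Pi.sub_apply, Pi.mul_apply, Pi.pow_apply] at huT huS
    have key : (deriv (deriv (deriv α)) s * deriv β t
          + deriv α s * deriv (deriv (deriv β)) t)
        * (2 * γ * deriv α s ^ 2 * deriv β t ^ 2 * (α s * β t + γ) ^ 2) = 0 := by
      linear_combination (deriv α s * deriv β t * (α s * β t + γ) ^ 2) * huS
        - (deriv α s * deriv (deriv β) t * γ ^ 2 + 2 * α s * deriv α s * deriv β t ^ 2 * γ + 2 * α s * deriv α s * β t * deriv (deriv β) t * γ + 2 * α s ^ 2 * deriv α s * β t * deriv β t ^ 2 + α s ^ 2 * deriv α s * β t ^ 2 * deriv (deriv β) t) * (hPs s hs t ht)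
        - (deriv (deriv α) s * deriv β t * γ ^ 2 + 2 * deriv α s ^ 2 * β t * deriv β t * γ + 2 * α s * deriv (deriv α) s * β t * deriv β t * γ + 2 * α s * deriv α s ^ 2 * β t ^ 2 * deriv β t + α s ^ 2 * deriv (deriv α) s * β t ^ 2 * deriv β t) * huT
        - ((-1) * deriv (deriv α) s * deriv (deriv β) t * γ ^ 2 + (-4) * deriv α s ^ 2 * deriv β t ^ 2 * γ + (-2) * deriv α s ^ 2 * β t * deriv (deriv β) t * γ + (-2) * α s * deriv (deriv α) s * deriv β t ^ 2 * γ + (-2) * α s * deriv (deriv α) s * β t * deriv (deriv β) t * γ + (-4) * α s * deriv α s ^ 2 * β t * deriv β t ^ 2 + (-2) * α s * deriv α s ^ 2 * β t ^ 2 * deriv (deriv β) t + (-2) * α s ^ 2 * deriv (deriv α) s * β t * deriv β t ^ 2 + (-1) * α s ^ 2 * deriv (deriv α) s * β t ^ 2 * deriv (deriv β) t) * (hP s hs t ht)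
    have hnz2 : (2 * γ * deriv α s ^ 2 * deriv β t ^ 2 * (α s * β t + γ) ^ 2) ≠ 0 :=
      mul_ne_zero (mul_ne_zero (mul_ne_zero (mul_ne_zero two_ne_zero hγ0)
        (pow_ne_zero 2 h1)) (pow_ne_zero 2 h2)) (pow_ne_zero 2 h3)
    exact (mul_eq_zero.mp key).resolve_right hnz2
  have hs₀ : (a₁ + a₂) / 2 ∈ Set.Ioo a₁ a₂ := by constructor <;> linarith
  refine hnc ⟨-(deriv (deriv (deriv α)) ((a₁ + a₂) / 2) / deriv α ((a₁ + a₂) / 2)),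
    fun t ht => ?_⟩
  obtain ⟨h0, h1, h2, h3⟩ := hnz _ hs₀ t ht
  have h := hS _ hs₀ t ht
  field_simp
  linear_combination h
end

section
/- There do not exist real numbers c and p, a nonempty open interval I ⊆ (−π/2, π/2), and a smooth (C^∞) function κ : I → ℝ such that all of the following hold for every y ∈ I: κ''(y) + c·e^{2κ(y)} = 2/cos²(y); κ'(y) ≠ tan(y); and (κ''(y) − 1/cos²(y))·cos(y) = 2p·(κ'(y) − tan(y)). -/
open Real

/-- There are no constants `c`, `p`, no nonempty open interval `I ⊆ (−π/2, π/2)`, and no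
smooth `κ : I → ℝ` such that on `I`: `κ'' + c·e^{2κ} = 2/cos²`, `κ' ≠ tan`, and
`(κ'' − 1/cos²)·cos = 2p·(κ' − tan)`. -/
theorem no_proportional_zeta_solution :
    ¬ ∃ (c p a b : ℝ) (κ : ℝ → ℝ),
      a < b ∧ Set.Ioo a b ⊆ Set.Ioo (-(π / 2)) (π / 2) ∧
      ContDiffOn ℝ (⊤ : ℕ∞) κ (Set.Ioo a b) ∧
      ∀ y ∈ Set.Ioo a b,
        deriv (deriv κ) y + c * Real.exp (2 * κ y) = 2 / (Real.cos y) ^ 2 ∧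
        deriv κ y ≠ Real.tan y ∧
        (deriv (deriv κ) y - 1 / (Real.cos y) ^ 2) * Real.cos y
          = 2 * p * (deriv κ y - Real.tan y) := by
  rintro ⟨c, p, a, b, κ, hab, hsub, hκ, H⟩
  have hIopen : IsOpen (Set.Ioo a b) := isOpen_Ioo
  have hκd : DifferentiableOn ℝ κ (Set.Ioo a b) := hκ.differentiableOn (by simp)
  have hκd2 : DifferentiableOn ℝ (deriv κ) (Set.Ioo a b) :=
    (hκ.deriv_of_isOpen (m := 1) hIopen (WithTop.coe_le_coe.2 le_top)).differentiableOn (by simp)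
  -- Step 1: the key pointwise identity `2p·(κ'−tan)·cos = 1 + 2p² − p·sin` on the interval.
  have key : ∀ y ∈ Set.Ioo a b,
      2 * p * (deriv κ y - Real.tan y) * Real.cos y
        = 1 + 2 * p ^ 2 - p * Real.sin y := by
    intro y hy
    have hymem := hsub hy
    have hcos : Real.cos y > 0 := Real.cos_pos_of_mem_Ioo hymem
    have hcne : Real.cos y ≠ 0 := ne_of_gt hcos
    have h1 := (H y hy).1
    have h3 := (H y hy).2.2
    have hκy : HasDerivAt κ (deriv κ y) y :=
      (hκd.differentiableAt (hIopen.mem_nhds hy)).hasDerivAt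
    have hκy2 : HasDerivAt (deriv κ) (deriv (deriv κ) y) y :=
      (hκd2.differentiableAt (hIopen.mem_nhds hy)).hasDerivAt
    have hcosD : HasDerivAt Real.cos (-Real.sin y) y := Real.hasDerivAt_cos y
    have htanD : HasDerivAt Real.tan (1 / Real.cos y ^ 2) y := Real.hasDerivAt_tan hcne
    -- The function G equals 1 on the interval, hence has vanishing derivative.
    set G : ℝ → ℝ := fun x =>
      c * Real.exp (2 * κ x) * Real.cos x ^ 2
        + 2 * p * (deriv κ x - Real.tan x) * Real.cos x with hG
    have hGeq : ∀ x ∈ Set.Ioo a b, G x = 1 := by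
      intro x hx
      have hcx : Real.cos x ≠ 0 := ne_of_gt (Real.cos_pos_of_mem_Ioo (hsub hx))
      have e1 := (H x hx).1
      have e3 := (H x hx).2.2
      have hce : c * Real.exp (2 * κ x) = 2 / Real.cos x ^ 2 - deriv (deriv κ) x := by
        linarith
      rw [hG]
      simp only [← e3, hce]
      field_simp
      ring
    have hGd : HasDerivAt G
        ((c * (Real.exp (2 * κ y) * (2 * deriv κ y))) * Real.cos y ^ 2
          + (c * Real.exp (2 * κ y)) * ((2 : ℕ) * Real.cos y ^ 1 * (-Real.sin y))
          + ((2 * p * (deriv (deriv κ) y - 1 / Real.cos y ^ 2)) * Real.cos y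
            + (2 * p * (deriv κ y - Real.tan y)) * (-Real.sin y))) y := by
      have e1 : HasDerivAt (fun x => c * Real.exp (2 * κ x))
          (c * (Real.exp (2 * κ y) * (2 * deriv κ y))) y :=
        ((hκy.const_mul 2).exp).const_mul c
      have e2 : HasDerivAt (fun x => Real.cos x ^ 2)
          ((2 : ℕ) * Real.cos y ^ 1 * (-Real.sin y)) y := hcosD.pow 2
      have e4 : HasDerivAt (fun x => 2 * p * (deriv κ x - Real.tan x))
          (2 * p * (deriv (deriv κ) y - 1 / Real.cos y ^ 2)) y :=
        (hκy2.sub htanD).const_mul (2 * p)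
      exact (e1.mul e2).add (e4.mul hcosD)
    have hG0 : deriv G y = 0 := by
      have hev : G =ᶠ[nhds y] fun _ => (1 : ℝ) :=
        Filter.eventuallyEq_of_mem (hIopen.mem_nhds hy) hGeq
      rw [hev.deriv_eq]
      exact deriv_const y 1
    have hGd' := hGd.deriv
    rw [hG0] at hGd'
    -- now pure algebra
    set K := deriv (deriv κ) y
    set D := deriv κ y
    set S := Real.sin y
    set C := Real.cos y
    set U := D - Real.tan y with hUdef
    have hU : U ≠ 0 := sub_ne_zero.2 (H y hy).2.1
    have hce : c * Real.exp (2 * κ y) + K = 2 / C ^ 2 := by linarith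
    have hpy : S ^ 2 + C ^ 2 = 1 := Real.sin_sq_add_cos_sq y
    have hD'' : D * C = U * C + S := by
      rw [hUdef, Real.tan_eq_sin_div_cos, sub_mul, div_mul_cancel₀ (Real.sin y) hcne]
      ring
    set ce := c * Real.exp (2 * κ y) with hcedef
    have h1' : K + ce = 2 / C ^ 2 := by linarith
    have h3' : (K - 1 / C ^ 2) * C = 2 * p * U := h3
    have hGd'' : 0 = ce * (2 * D) * C ^ 2 + ce * ((2 : ℕ) * C ^ 1 * (-S))
        + (2 * p * (K - 1 / C ^ 2) * C + 2 * p * U * (-S)) := by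
      rw [hGd']; ring
    show 2 * p * U * C = 1 + 2 * p ^ 2 - p * S
    field_simp at h1' h3' hGd''
    have hfacC : U * (2 * p * U * C - (1 + 2 * p ^ 2 - p * S)) * C ^ 2 = 0 := by
      linear_combination (C/2) * hGd'' + (U*C^2) * h1' + (p*C - U*C^2) * h3' + (ce*C^3) * hD''
    have hfac : U * (2 * p * U * C - (1 + 2 * p ^ 2 - p * S)) = 0 := by
      rcases mul_eq_zero.1 hfacC with h | h
      · exact h
      · exact absurd h (pow_ne_zero 2 (ne_of_gt hcos))
    rcases mul_eq_zero.1 hfac with h | h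
    · exact absurd h hU
    · linarith
  -- Step 2: p ≠ 0.
  have hmid : (a + b) / 2 ∈ Set.Ioo a b := ⟨by linarith, by linarith⟩
  have hp : p ≠ 0 := by
    intro h
    have := key _ hmid
    rw [h] at this
    nlinarith [this]
  -- Step 3: sin is constant on the interval.
  have hsin : ∀ y ∈ Set.Ioo a b,
      Real.sin y * (4 * p ^ 2 + 1) = 3 * p + 4 * p ^ 3 := by
    intro y hy
    have hcos : Real.cos y > 0 := Real.cos_pos_of_mem_Ioo (hsub hy)
    have hcne : Real.cos y ≠ 0 := ne_of_gt hcos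
    have h3 := (H y hy).2.2
    have hκy2 : HasDerivAt (deriv κ) (deriv (deriv κ) y) y :=
      (hκd2.differentiableAt (hIopen.mem_nhds hy)).hasDerivAt
    have hcosD : HasDerivAt Real.cos (-Real.sin y) y := Real.hasDerivAt_cos y
    have htanD : HasDerivAt Real.tan (1 / Real.cos y ^ 2) y := Real.hasDerivAt_tan hcne
    set L : ℝ → ℝ := fun x =>
      2 * p * (deriv κ x - Real.tan x) * Real.cos x + p * Real.sin x with hL
    have hLeq : ∀ x ∈ Set.Ioo a b, L x = 1 + 2 * p ^ 2 := by
      intro x hx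
      have := key x hx
      rw [hL]
      dsimp only
      linarith
    have hLd : HasDerivAt L
        ((2 * p * (deriv (deriv κ) y - 1 / Real.cos y ^ 2)) * Real.cos y
          + (2 * p * (deriv κ y - Real.tan y)) * (-Real.sin y)
          + p * Real.cos y) y := by
      have e4 : HasDerivAt (fun x => 2 * p * (deriv κ x - Real.tan x))
          (2 * p * (deriv (deriv κ) y - 1 / Real.cos y ^ 2)) y :=
        (hκy2.sub htanD).const_mul (2 * p)
      exact (e4.mul hcosD).add ((Real.hasDerivAt_sin y).const_mul p)
    have hL0 : deriv L y = 0 := by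
      have hev : L =ᶠ[nhds y] fun _ => (1 + 2 * p ^ 2 : ℝ) :=
        Filter.eventuallyEq_of_mem (hIopen.mem_nhds hy) hLeq
      rw [hev.deriv_eq]
      exact deriv_const y _
    have hLd' := hLd.deriv
    rw [hL0] at hLd'
    have hkey := key y hy
    have hpy : Real.sin y ^ 2 + Real.cos y ^ 2 = 1 := Real.sin_sq_add_cos_sq y
    have h2 : Real.sin y * (4 * p ^ 2 + 1) * (2 * p)
        = (3 * p + 4 * p ^ 3) * (2 * p) := by
      linear_combination (2*p*Real.cos y) * hLd' + (4*p^2*Real.cos y) * h3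
        + (4*p^2 - 2*p*Real.sin y) * hkey + (2*p^2) * hpy
    exact mul_right_cancel₀ (by simpa using hp) h2
  -- Step 4: contradiction since sin is strictly monotone.
  set y₁ := (3 * a + b) / 4
  set y₂ := (a + 3 * b) / 4
  have hy₁ : y₁ ∈ Set.Ioo a b := ⟨by simp only [y₁]; linarith, by simp only [y₁]; linarith⟩
  have hy₂ : y₂ ∈ Set.Ioo a b := ⟨by simp only [y₂]; linarith, by simp only [y₂]; linarith⟩
  have h12 : y₁ < y₂ := by simp only [y₁, y₂]; linarith
  have hlt : Real.sin y₁ < Real.sin y₂ :=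
    Real.strictMonoOn_sin (Set.Ioo_subset_Icc_self (hsub hy₁))
      (Set.Ioo_subset_Icc_self (hsub hy₂)) h12
  have e1 := hsin y₁ hy₁
  have e2 := hsin y₂ hy₂
  nlinarith [sq_nonneg p]
end

section
/- Let I ⊆ ℝ be a nonempty open interval, let c ∈ ℝ, let φ : I → ℝ be three times continuously differentiable and χ : I → ℝ twice continuously differentiable, with φ(t)·φ'(t) ≠ 0 for every t ∈ I. If for every t ∈ I both (φ''(t) + φ'(t)·χ'(t))·φ(t) = 2·φ'(t)² and 2·φ'(t)² = (c + χ''(t) + χ'(t)²)·φ(t)² hold, then for every t ∈ I: φ(t)·φ'(t)·φ'''(t) = 2·(φ(t)·φ''(t) − φ'(t)²)·φ''(t) + c·φ(t)·φ'(t)². -/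
/-- Reduction of the weakly Einstein condition, case (i): if `φ` is `C³` and `χ` is `C²`
on a nonempty open interval with `φ·φ' ≠ 0`, and `(φ'' + φ'χ')·φ = 2φ'²` and
`2φ'² = (c + χ'' + χ'²)·φ²` hold, then `φ·φ'·φ''' = 2(φφ'' − φ'²)·φ'' + c·φ·φ'²`. -/
theorem weakly_einstein_reduction_case_one (a b c : ℝ) (hab : a < b) (φ χ : ℝ → ℝ)
    (hφ : ContDiffOn ℝ 3 φ (Set.Ioo a b)) (hχ : ContDiffOn ℝ 2 χ (Set.Ioo a b))
    (hne : ∀ t ∈ Set.Ioo a b, φ t * deriv φ t ≠ 0)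
    (h1 : ∀ t ∈ Set.Ioo a b,
      (deriv (deriv φ) t + deriv φ t * deriv χ t) * φ t = 2 * (deriv φ t) ^ 2)
    (h2 : ∀ t ∈ Set.Ioo a b,
      2 * (deriv φ t) ^ 2
        = (c + deriv (deriv χ) t + (deriv χ t) ^ 2) * (φ t) ^ 2) :
    ∀ t ∈ Set.Ioo a b,
      φ t * deriv φ t * deriv (deriv (deriv φ)) t
        = 2 * (φ t * deriv (deriv φ) t - (deriv φ t) ^ 2) * deriv (deriv φ) t
          + c * φ t * (deriv φ t) ^ 2 := by
  have hsO : IsOpen (Set.Ioo a b) := isOpen_Ioo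
  have hφ1 : ContDiffOn ℝ 2 (deriv φ) (Set.Ioo a b) :=
    hφ.deriv_of_isOpen hsO (by norm_num)
  have hφ2 : ContDiffOn ℝ 1 (deriv (deriv φ)) (Set.Ioo a b) :=
    hφ1.deriv_of_isOpen hsO (by norm_num)
  have hχ1 : ContDiffOn ℝ 1 (deriv χ) (Set.Ioo a b) :=
    hχ.deriv_of_isOpen hsO (by norm_num)
  intro t ht
  have hmem : Set.Ioo a b ∈ nhds t := hsO.mem_nhds ht
  -- differentiability at t
  have hd0 : HasDerivAt φ (deriv φ t) t :=
    (((hφ.differentiableOn (by norm_num)).differentiableAt hmem)).hasDerivAt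
  have hd1 : HasDerivAt (deriv φ) (deriv (deriv φ) t) t :=
    ((hφ1.differentiableOn (by norm_num)).differentiableAt hmem).hasDerivAt
  have hd2 : HasDerivAt (deriv (deriv φ)) (deriv (deriv (deriv φ)) t) t :=
    ((hφ2.differentiableOn (by norm_num)).differentiableAt hmem).hasDerivAt
  have hc1 : HasDerivAt (deriv χ) (deriv (deriv χ) t) t :=
    ((hχ1.differentiableOn (by norm_num)).differentiableAt hmem).hasDerivAt
  -- derivative of the left-hand side of h1
  have H : HasDerivAt (fun x => (deriv (deriv φ) x + deriv φ x * deriv χ x) * φ x)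
      ((deriv (deriv (deriv φ)) t +
        (deriv (deriv φ) t * deriv χ t + deriv φ t * deriv (deriv χ) t)) * φ t +
        (deriv (deriv φ) t + deriv φ t * deriv χ t) * deriv φ t) t :=
    (hd2.add (hd1.mul hc1)).mul hd0
  have H2 : HasDerivAt (fun x => 2 * (deriv φ x) ^ 2)
      (2 * ((2 : ℝ) * deriv φ t ^ 1 * deriv (deriv φ) t)) t :=
    (hd1.pow 2).const_mul 2
  have heq : (fun x => (deriv (deriv φ) x + deriv φ x * deriv χ x) * φ x)
      =ᶠ[nhds t] (fun x => 2 * (deriv φ x) ^ 2) :=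
    Filter.eventually_of_mem hmem h1
  have H' : HasDerivAt (fun x => 2 * (deriv φ x) ^ 2)
      ((deriv (deriv (deriv φ)) t +
        (deriv (deriv φ) t * deriv χ t + deriv φ t * deriv (deriv χ) t)) * φ t +
        (deriv (deriv φ) t + deriv φ t * deriv χ t) * deriv φ t) t :=
    H.congr_of_eventuallyEq heq.symm
  have key := H'.unique H2
  -- algebra
  have e1 := h1 t ht
  have e2 := h2 t ht
  have hne' := hne t ht
  have hp : φ t ≠ 0 := fun h => hne' (by rw [h]; ring)
  set p := φ t
  set q := deriv φ t
  set r := deriv (deriv φ) t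
  set s := deriv (deriv (deriv φ)) t
  set u := deriv χ t
  set v := deriv (deriv χ) t
  have hmain : p * (p * q * s) =
      p * (2 * (p * r - q ^ 2) * r + c * p * q ^ 2) := by
    linear_combination (p * q) * key + (q ^ 2 - 2 * p * r + p * q * u) * e1 + q ^ 2 * e2
  exact mul_left_cancel₀ hp hmain
end

section
/- Let I, J ⊆ ℝ be nonempty open intervals and let α, u, w : I → ℝ and β, v, γ : J → ℝ be continuously differentiable functions such that α'(s)·β'(t) ≠ 0 for all (s, t) ∈ I × J, and such that α(s)·β(t) + γ(t) = u(s)·v(t) + w(s) for all (s, t) ∈ I × J. Then there exist constants p, q₁, q₂, γ₀ ∈ ℝ with p ≠ 0 such that u(s) = p·α(s) + q₁ and w(s) = γ₀ − q₁·q₂ − p·q₂·α(s) for all s ∈ I, and v(t) = p⁻¹·β(t) + q₂ and γ(t) = p⁻¹·q₁·β(t) + γ₀ for all t ∈ J; in particular, the function (s,t) ↦ α(s)·β(t) + γ(t) can be written as a(s)·b(t) + γ₀' for some functions a : I → ℝ, b : J → ℝ and a constant γ₀' ∈ ℝ. -/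
/-- Uniqueness of multiplicatively separated representations: if `C¹` functions satisfy
`α(s)·β(t) + γ(t) = u(s)·v(t) + w(s)` on a product of nonempty open intervals, with
`α'(s)·β'(t)` nowhere zero, then there are constants `p ≠ 0`, `q₁`, `q₂`, `γ₀` with
`u = p·α + q₁`, `w = γ₀ − q₁q₂ − p·q₂·α`, `v = p⁻¹·β + q₂`, `γ = p⁻¹·q₁·β + γ₀`. -/
theorem separated_representation_uniqueness
    (a₁ a₂ b₁ b₂ : ℝ) (ha : a₁ < a₂) (hb : b₁ < b₂)
    (α u w β v γ : ℝ → ℝ)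
    (hα : ContDiffOn ℝ 1 α (Set.Ioo a₁ a₂)) (hu : ContDiffOn ℝ 1 u (Set.Ioo a₁ a₂))
    (hw : ContDiffOn ℝ 1 w (Set.Ioo a₁ a₂))
    (hβ : ContDiffOn ℝ 1 β (Set.Ioo b₁ b₂)) (hv : ContDiffOn ℝ 1 v (Set.Ioo b₁ b₂))
    (hγ : ContDiffOn ℝ 1 γ (Set.Ioo b₁ b₂))
    (hne : ∀ s ∈ Set.Ioo a₁ a₂, ∀ t ∈ Set.Ioo b₁ b₂, deriv α s * deriv β t ≠ 0)
    (heq : ∀ s ∈ Set.Ioo a₁ a₂, ∀ t ∈ Set.Ioo b₁ b₂,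
      α s * β t + γ t = u s * v t + w s) :
    ∃ p q₁ q₂ γ₀ : ℝ, p ≠ 0 ∧
      (∀ s ∈ Set.Ioo a₁ a₂,
        u s = p * α s + q₁ ∧ w s = γ₀ - q₁ * q₂ - p * q₂ * α s) ∧
      (∀ t ∈ Set.Ioo b₁ b₂,
        v t = p⁻¹ * β t + q₂ ∧ γ t = p⁻¹ * q₁ * β t + γ₀) := by
  have hs₀ : (a₁ + a₂) / 2 ∈ Set.Ioo a₁ a₂ := ⟨by linarith, by linarith⟩
  have ht₀ : (b₁ + b₂) / 2 ∈ Set.Ioo b₁ b₂ := ⟨by linarith, by linarith⟩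
  set s₀ := (a₁ + a₂) / 2 with hs₀def
  set t₀ := (b₁ + b₂) / 2 with ht₀def
  have hαd : ∀ s ∈ Set.Ioo a₁ a₂, deriv α s ≠ 0 := by
    intro s hs h
    exact hne s hs t₀ ht₀ (by rw [h, zero_mul])
  have hβd : ∀ t ∈ Set.Ioo b₁ b₂, deriv β t ≠ 0 := by
    intro t ht h
    exact hne s₀ hs₀ t ht (by rw [h, mul_zero])
  -- α is nonconstant
  have hαnc : ∃ s₁ ∈ Set.Ioo a₁ a₂, ∃ s₂ ∈ Set.Ioo a₁ a₂, α s₁ ≠ α s₂ := by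
    by_contra h
    push_neg at h
    apply hαd s₀ hs₀
    have hev : α =ᶠ[nhds s₀] fun _ => α s₀ := by
      filter_upwards [Ioo_mem_nhds hs₀.1 hs₀.2] with x hx
      exact h x hx s₀ hs₀
    rw [hev.deriv_eq, deriv_const]
  have hβnc : ∃ t₁ ∈ Set.Ioo b₁ b₂, ∃ t₂ ∈ Set.Ioo b₁ b₂, β t₁ ≠ β t₂ := by
    by_contra h
    push_neg at h
    apply hβd t₀ ht₀
    have hev : β =ᶠ[nhds t₀] fun _ => β t₀ := by
      filter_upwards [Ioo_mem_nhds ht₀.1 ht₀.2] with x hx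
      exact h x hx t₀ ht₀
    rw [hev.deriv_eq, deriv_const]
  obtain ⟨s₁, hs₁, s₂, hs₂, hαs⟩ := hαnc
  obtain ⟨t₁, ht₁, t₂, ht₂, hβt⟩ := hβnc
  have hαs' : α s₁ - α s₂ ≠ 0 := sub_ne_zero_of_ne hαs
  have hβt' : β t₁ - β t₂ ≠ 0 := sub_ne_zero_of_ne hβt
  -- the fundamental four-point identity
  have key : ∀ s ∈ Set.Ioo a₁ a₂, ∀ t ∈ Set.Ioo b₁ b₂,
      (α s - α s₂) * (β t - β t₂) = (u s - u s₂) * (v t - v t₂) := by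
    intro s hs t ht
    linear_combination (heq s hs t ht) - (heq s hs t₂ ht₂) - (heq s₂ hs₂ t ht) +
      (heq s₂ hs₂ t₂ ht₂)
  have kprod : (u s₁ - u s₂) * (v t₁ - v t₂) ≠ 0 := by
    rw [← key s₁ hs₁ t₁ ht₁]
    exact mul_ne_zero hαs' hβt'
  have hune : u s₁ - u s₂ ≠ 0 := left_ne_zero_of_mul kprod
  have hvne : v t₁ - v t₂ ≠ 0 := right_ne_zero_of_mul kprod
  obtain ⟨p, hp, hpa⟩ : ∃ p : ℝ, p ≠ 0 ∧ u s₁ - u s₂ = p * (α s₁ - α s₂) := by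
    refine ⟨(u s₁ - u s₂) / (α s₁ - α s₂), div_ne_zero hune hαs', ?_⟩
    field_simp
  have hp1 : p * p⁻¹ = 1 := mul_inv_cancel₀ hp
  -- u formula
  have hu' : ∀ s ∈ Set.Ioo a₁ a₂, u s = p * α s + (u s₂ - p * α s₂) := by
    intro s hs
    have k := key s hs t₁ ht₁
    have k1 := key s₁ hs₁ t₁ ht₁
    -- cross-multiplied cancellation of (v t₁ - v t₂)
    have hcross : (α s - α s₂) * (u s₁ - u s₂) = (u s - u s₂) * (α s₁ - α s₂) := by
      have h5 : ((α s - α s₂) * (u s₁ - u s₂) - (u s - u s₂) * (α s₁ - α s₂)) *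
          (β t₁ - β t₂) = 0 := by
        linear_combination (u s₁ - u s₂) * k - (u s - u s₂) * k1
      rcases mul_eq_zero.mp h5 with h | h
      · linarith
      · exact absurd h hβt'
    have h2 : (u s - u s₂ - p * (α s - α s₂)) * (α s₁ - α s₂) = 0 := by
      linear_combination -hcross + (α s - α s₂) * hpa
    rcases mul_eq_zero.mp h2 with h | h
    · linarith [h]
    · exact absurd h hαs'
  -- v formula
  have hv' : ∀ t ∈ Set.Ioo b₁ b₂, v t = p⁻¹ * β t + (v t₂ - p⁻¹ * β t₂) := by
    intro t ht
    have k := key s₁ hs₁ t ht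
    rw [hpa] at k
    -- cancel (α s₁ - α s₂): β t - β t₂ = p * (v t - v t₂)
    have h3 : β t - β t₂ = p * (v t - v t₂) := by
      apply mul_left_cancel₀ hαs'
      linear_combination k
    have h4 : (v t - v t₂ - p⁻¹ * (β t - β t₂)) * p = 0 := by
      linear_combination -h3 - (β t - β t₂) * hp1
    rcases mul_eq_zero.mp h4 with h | h
    · linarith [h]
    · exact absurd h hp
  set q₁ : ℝ := u s₂ - p * α s₂ with hq₁def
  set q₂ : ℝ := v t₂ - p⁻¹ * β t₂ with hq₂def
  set γ₀ : ℝ := γ t₀ - p⁻¹ * q₁ * β t₀ with hγ₀def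
  clear_value q₁ q₂ γ₀
  -- w formula
  have hw' : ∀ s ∈ Set.Ioo a₁ a₂, w s = γ₀ - q₁ * q₂ - p * q₂ * α s := by
    intro s hs
    have e := heq s hs t₀ ht₀
    rw [hu' s hs, hv' t₀ ht₀] at e
    rw [hγ₀def]
    linear_combination -e - (α s * β t₀) * hp1
  refine ⟨p, q₁, q₂, γ₀, hp, fun s hs => ⟨by rw [hu' s hs, hq₁def], hw' s hs⟩,
    fun t ht => ⟨by rw [hv' t ht, hq₂def], ?_⟩⟩
  have e := heq s₀ hs₀ t ht
  rw [hu' s₀ hs₀, hv' t ht, hw' s₀ hs₀] at e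
  linear_combination e + (α s₀ * β t) * hp1
end
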